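/- arXiv:1510.04067 — 6 statements merged into one kernel-verified Lean document; each statement's English description precedes it below -/
import Mathlib

section
/- Let κ < λ be infinite regular cardinals. The poset ℙ(λ,κ) is κ-directed closed: every directed subset of ℙ(λ,κ) of cardinality less than κ has a lower bound. -/
noncomputable section

open Cardinal Set

namespace Paper

/-- `C` is a club (closed and unbounded set) in the ordinal `α`. -/
def IsClubIn (C : Set Ordinal) (α : Ordinal) : Prop :=
  C ⊆ Set.Iio α ∧ (∀ γ < α, ∃ β ∈ C, γ ≤ β) ∧
    ∀ γ < α, 0 < γ → sSup (C ∩ Set.Iio γ) = γ → γ ∈ C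

/-- `γ` is a limit point of `C`: it belongs to `C` and is the supremum of the
earlier elements of `C`. -/
def IsLimitPt (γ : Ordinal) (C : Set Ordinal) : Prop :=
  γ ∈ C ∧ sSup (C ∩ Set.Iio γ) = γ

/-- A condition in the poset `ℙ(lam, kap)`: a matrix
`⟨C α i : α ≤ top limit, iMin α ≤ i < kap⟩` with `top < lam` a limit ordinal,
each `C α i` a club in `α`, increasing in `i`, coherent, and such that every
limit `α < β ≤ top` is a limit point of some `C β i`. -/
structure PCond (lam kap : Cardinal.{0}) where
  top : Ordinal
  iMin : Ordinal → Ordinal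
  C : Ordinal → Ordinal → Set Ordinal
  top_lt : top < lam.ord
  top_isLimit : Order.IsSuccLimit top
  iMin_lt : ∀ α ≤ top, Order.IsSuccLimit α → iMin α < kap.ord
  club : ∀ α ≤ top, Order.IsSuccLimit α → ∀ i, iMin α ≤ i → i < kap.ord → IsClubIn (C α i) α
  mono : ∀ α ≤ top, Order.IsSuccLimit α → ∀ i j, iMin α ≤ i → i ≤ j → j < kap.ord →
    C α i ⊆ C α j
  coherent : ∀ α β, α < β → β ≤ top → Order.IsSuccLimit α → Order.IsSuccLimit β →
    ∀ i, iMin β ≤ i → i < kap.ord → IsLimitPt α (C β i) →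
      iMin α ≤ i ∧ C β i ∩ Set.Iio α = C α i
  covers : ∀ α β, α < β → β ≤ top → Order.IsSuccLimit α → Order.IsSuccLimit β →
    ∃ i, iMin β ≤ i ∧ i < kap.ord ∧ IsLimitPt α (C β i)

/-- The order on `ℙ(lam, kap)`: `PExt q p` means `q ≤ p`, i.e. `q`
end-extends `p`. -/
def PExt {lam kap : Cardinal.{0}} (q p : PCond lam kap) : Prop :=
  p.top ≤ q.top ∧ (∀ α ≤ p.top, Order.IsSuccLimit α → q.iMin α = p.iMin α) ∧
    ∀ α ≤ p.top, Order.IsSuccLimit α → ∀ i, p.iMin α ≤ i → i < kap.ord → q.C α i = p.C α i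

theorem bddAbove_inter_Iio (C : Set Ordinal) (β : Ordinal) :
    BddAbove (C ∩ Set.Iio β) :=
  ⟨β, fun _ hz => le_of_lt hz.2⟩

theorem IsLimitPt.mono' {β : Ordinal} {C C' : Set Ordinal} (hβ : β ≠ 0) (hsub : C ⊆ C')
    (h : IsLimitPt β C) : IsLimitPt β C' := by
  obtain ⟨hmem, hsup⟩ := h
  have hne : (C ∩ Set.Iio β).Nonempty := by
    rcases Set.eq_empty_or_nonempty (C ∩ Set.Iio β) with he | hne
    · rw [he, csSup_empty] at hsup
      exact absurd (Ordinal.bot_eq_zero ▸ hsup.symm) hβ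
    · exact hne
  refine ⟨hsub hmem, le_antisymm
    (csSup_le (hne.mono (Set.inter_subset_inter hsub subset_rfl)) fun z hz => le_of_lt hz.2) ?_⟩
  calc β = sSup (C ∩ Set.Iio β) := hsup.symm
    _ ≤ sSup (C' ∩ Set.Iio β) :=
        csSup_le_csSup (bddAbove_inter_Iio _ _) hne (Set.inter_subset_inter hsub subset_rfl)

/-- Proposition 6.7: for infinite regular cardinals `kap < lam`, the poset
`ℙ(lam, kap)` is `kap`-directed closed: every directed subset of cardinality
less than `kap` has a lower bound. -/
theorem statement8 (lam kap : Cardinal.{0}) (hk : kap.IsRegular)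
    (hl : lam.IsRegular) (hkl : kap < lam) (D : Set (PCond lam kap))
    (hdir : ∀ p ∈ D, ∀ q ∈ D, ∃ r ∈ D, PExt r p ∧ PExt r q)
    (hcard : #D < Cardinal.lift.{1} kap) :
    ∃ r : PCond lam kap, ∀ p ∈ D, PExt r p := by
  classical
  by_cases hD : D.Nonempty
  swap
  · -- trivial condition
    have hωlam : Ordinal.omega0 < lam.ord := by
      rw [← Cardinal.ord_aleph0]
      exact Cardinal.ord_lt_ord.mpr (lt_of_le_of_lt hk.aleph0_le hkl)
    have hκ0 : (0 : Ordinal) < kap.ord := by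
      rw [← Cardinal.ord_zero]
      exact Cardinal.ord_lt_ord.mpr (lt_of_lt_of_le Cardinal.aleph0_pos hk.aleph0_le)
    refine ⟨⟨Ordinal.omega0, fun _ => 0, fun α _ => Set.Iio α, hωlam,
      Ordinal.isSuccLimit_omega0, fun _ _ _ => hκ0, ?_, ?_, ?_, ?_⟩,
      fun p hp => (hD ⟨p, hp⟩).elim⟩
    · intro α _ _ i _ _
      exact ⟨Set.Subset.rfl, fun γ hγ => ⟨γ, hγ, le_rfl⟩, fun γ hγ _ _ => hγ⟩
    · intro _ _ _ _ _ _ _ _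
      exact Set.Subset.rfl
    · intro α β hαβ hβ hlα _ i _ _ _
      exact absurd (lt_of_lt_of_le hαβ hβ) (not_lt.mpr (Ordinal.omega0_le_of_isSuccLimit hlα))
    · intro α β hαβ hβ hlα _
      exact absurd (lt_of_lt_of_le hαβ hβ) (not_lt.mpr (Ordinal.omega0_le_of_isSuccLimit hlα))
  by_cases hmax : ∃ p ∈ D, ∀ q ∈ D, q.top ≤ p.top
  · obtain ⟨p, hp, hmx⟩ := hmax
    refine ⟨p, fun q hq => ?_⟩
    obtain ⟨r, _, hrp, hrq⟩ := hdir p hp q hq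
    have hqp : q.top ≤ p.top := hmx q hq
    refine ⟨hqp, fun α hα hl => ?_, fun α hα hl i hi hik => ?_⟩
    · rw [← hrp.2.1 α (le_trans hα hqp) hl, hrq.2.1 α hα hl]
    · have hiMin : p.iMin α = q.iMin α := by
        rw [← hrp.2.1 α (le_trans hα hqp) hl, hrq.2.1 α hα hl]
      rw [← hrp.2.2 α (le_trans hα hqp) hl i (by rw [hiMin]; exact hi) hik,
        hrq.2.2 α hα hl i hi hik]
  -- main case
  push_neg at hmax
  -- a small index type
  obtain ⟨d, hd_lt, hd_eq⟩ := Cardinal.lt_lift_iff.mp hcard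
  have hequiv : Nonempty (d.out ≃ ↥D) := by
    rw [← Cardinal.lift_mk_eq']
    simp [Cardinal.mk_out, hd_eq]
  obtain ⟨e⟩ := hequiv
  have hι : #d.out < kap := by rw [Cardinal.mk_out]; exact hd_lt
  haveI hne : Nonempty d.out := ⟨e.symm ⟨hD.choose, hD.choose_spec⟩⟩
  set P : d.out → PCond lam kap := fun x => ((e x : ↥D) : PCond lam kap) with hP_def
  have hPD : ∀ x, P x ∈ D := fun x => (e x).2
  -- agreement
  have hag : ∀ p ∈ D, ∀ q ∈ D, ∀ α, α ≤ p.top → α ≤ q.top → Order.IsSuccLimit α →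
      p.iMin α = q.iMin α ∧
        ∀ i, p.iMin α ≤ i → i < kap.ord → p.C α i = q.C α i := by
    intro p hp q hq α hαp hαq hl
    obtain ⟨r, _, hrp, hrq⟩ := hdir p hp q hq
    have h1 : p.iMin α = q.iMin α := by
      rw [← hrp.2.1 α hαp hl, hrq.2.1 α hαq hl]
    refine ⟨h1, fun i hi hik => ?_⟩
    rw [← hrp.2.2 α hαp hl i hi hik, hrq.2.2 α hαq hl i (by rw [← h1]; exact hi) hik]
  -- the supremum of the tops
  set γ : Ordinal := ⨆ x, (P x).top with hγ_def
  have hbdd : BddAbove (Set.range fun x => (P x).top) := Ordinal.bddAbove_range _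
  have hle : ∀ x, (P x).top ≤ γ := fun x => le_ciSup hbdd x
  have hlt : ∀ x, (P x).top < γ := by
    intro x
    obtain ⟨q, hq, hgt⟩ := hmax (P x) (hPD x)
    have hq' : P (e.symm ⟨q, hq⟩) = q := by simp [hP_def]
    exact lt_of_lt_of_le hgt (hq' ▸ hle (e.symm ⟨q, hq⟩))
  have hexlt : ∀ α < γ, ∃ x, α < (P x).top := fun α hα => (lt_ciSup_iff hbdd).mp hα
  have hγlim : Order.IsSuccLimit γ := by
    rw [Ordinal.isSuccLimit_iff]
    constructor
    · obtain ⟨x⟩ := hne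
      exact fun h => absurd (h ▸ hlt x) (not_lt_of_ge zero_le)
    · rw [Order.isSuccPrelimit_iff_succ_lt]
      intro a ha
      obtain ⟨x, hx⟩ := hexlt a ha
      exact lt_of_lt_of_le ((P x).top_isLimit.succ_lt hx) (hle x)
  have hγlam : γ < lam.ord :=
    Cardinal.iSup_lt_ord_of_isRegular hl (hι.trans hkl) fun x => (P x).top_lt
  -- the new index istar
  set g : d.out × d.out → Ordinal := fun z =>
    if h : (P z.1).top < (P z.2).top then
      ((P z.2).covers (P z.1).top (P z.2).top h le_rfl (P z.1).top_isLimit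
        (P z.2).top_isLimit).choose
    else 0 with hg_def
  set istar : Ordinal := max (⨆ z, g z) (⨆ x, (P x).iMin (P x).top) with histar_def
  have hκ0 : (0 : Ordinal) < kap.ord := by
    rw [← Cardinal.ord_zero]
    exact Cardinal.ord_lt_ord.mpr (lt_of_lt_of_le Cardinal.aleph0_pos hk.aleph0_le)
  have hprod : #(d.out × d.out) < kap := by
    rw [Cardinal.mk_prod]
    simp only [Cardinal.lift_id]
    exact Cardinal.mul_lt_of_lt hk.aleph0_le hι hι
  have histar_lt : istar < kap.ord := by
    refine max_lt (Cardinal.iSup_lt_ord_of_isRegular hk hprod fun z => ?_)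
      (Cardinal.iSup_lt_ord_of_isRegular hk hι fun x =>
        (P x).iMin_lt (P x).top le_rfl (P x).top_isLimit)
    by_cases h : (P z.1).top < (P z.2).top
    · rw [hg_def]
      simp only []
      rw [dif_pos h]
      exact ((P z.2).covers (P z.1).top (P z.2).top h le_rfl (P z.1).top_isLimit
        (P z.2).top_isLimit).choose_spec.2.1
    · rw [hg_def]
      simp only []
      rw [dif_neg h]
      exact hκ0
  have hjle : ∀ x, (P x).iMin (P x).top ≤ istar := fun x =>
    le_trans (le_ciSup (Ordinal.bddAbove_range _) x) (le_max_right _ _)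
  have hcov : ∀ x y, (P x).top < (P y).top → ∀ i, istar ≤ i → i < kap.ord →
      IsLimitPt (P x).top ((P y).C (P y).top i) := by
    intro x y hxy i hi hik
    have hsp := ((P y).covers (P x).top (P y).top hxy le_rfl (P x).top_isLimit
      (P y).top_isLimit).choose_spec
    have hgval : g (x, y) = ((P y).covers (P x).top (P y).top hxy le_rfl (P x).top_isLimit
        (P y).top_isLimit).choose := by
      rw [hg_def]; simp only []; rw [dif_pos hxy]
    have hgle : g (x, y) ≤ istar :=
      le_trans (le_ciSup (Ordinal.bddAbove_range _) (x, y)) (le_max_left _ _)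
    refine IsLimitPt.mono' (P x).top_isLimit.ne_zero ?_ hsp.2.2
    exact (P y).mono (P y).top le_rfl (P y).top_isLimit _ i hsp.1
      (le_trans (hgval ▸ hgle) hi) hik
  -- the restriction lemma for the union club
  have hU : ∀ i, istar ≤ i → i < kap.ord → ∀ x,
      (⋃ y, (P y).C (P y).top i) ∩ Set.Iio (P x).top = (P x).C (P x).top i := by
    intro i hi hik x
    ext δ
    constructor
    · rintro ⟨hδ, hδx⟩
      rw [Set.mem_iUnion] at hδ
      obtain ⟨y, hδy⟩ := hδ
      rcases lt_trichotomy (P y).top (P x).top with hlt' | heq' | hgt'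
      · have hlp := hcov y x hlt' i hi hik
        obtain ⟨him, hcoh⟩ := (P x).coherent (P y).top (P x).top hlt' le_rfl
          (P y).top_isLimit (P x).top_isLimit i (le_trans (hjle x) hi) hik hlp
        have heqC : (P x).C (P y).top i = (P y).C (P y).top i :=
          (hag _ (hPD x) _ (hPD y) (P y).top (le_of_lt hlt') le_rfl
            (P y).top_isLimit).2 i him hik
        have hmem : δ ∈ (P x).C (P y).top i := by rw [heqC]; exact hδy
        rw [← hcoh] at hmem
        exact hmem.1
      · have heqC : (P y).C (P y).top i = (P x).C (P y).top i :=
          (hag _ (hPD y) _ (hPD x) (P y).top le_rfl (le_of_eq heq')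
            (P y).top_isLimit).2 i (le_trans (hjle y) hi) hik
        rw [heqC, heq'] at hδy
        exact hδy
      · have hlp := hcov x y hgt' i hi hik
        obtain ⟨him, hcoh⟩ := (P y).coherent (P x).top (P y).top hgt' le_rfl
          (P x).top_isLimit (P y).top_isLimit i (le_trans (hjle y) hi) hik hlp
        have heqC : (P y).C (P x).top i = (P x).C (P x).top i :=
          (hag _ (hPD y) _ (hPD x) (P x).top (le_of_lt hgt') le_rfl
            (P x).top_isLimit).2 i him hik
        have hmem : δ ∈ (P y).C (P y).top i ∩ Set.Iio (P x).top := ⟨hδy, hδx⟩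
        rw [hcoh, heqC] at hmem
        exact hmem
    · intro hδ
      have hcl := (P x).club (P x).top le_rfl (P x).top_isLimit i
        (le_trans (hjle x) hi) hik
      exact ⟨Set.mem_iUnion.mpr ⟨x, hδ⟩, hcl.1 hδ⟩
  have hres : ∀ i, istar ≤ i → i < kap.ord → ∀ x, ∀ α, α < (P x).top →
      (⋃ y, (P y).C (P y).top i) ∩ Set.Iio α = (P x).C (P x).top i ∩ Set.Iio α := by
    intro i hi hik x α hα
    ext δ
    constructor
    · rintro ⟨h1, h2⟩
      have hmem : δ ∈ (⋃ y, (P y).C (P y).top i) ∩ Set.Iio (P x).top :=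
        ⟨h1, lt_trans h2 hα⟩
      rw [hU i hi hik x] at hmem
      exact ⟨hmem, h2⟩
    · rintro ⟨h1, h2⟩
      exact ⟨Set.mem_iUnion.mpr ⟨x, h1⟩, h2⟩
  -- the glued matrix
  have hnotγ : ¬∃ x, γ ≤ (P x).top := by
    rintro ⟨x, hx⟩
    exact absurd hx (not_le.mpr (hlt x))
  obtain ⟨IM, CC, hIMeq, hCCeq, hIMγ, hCCγ⟩ :
      ∃ (IM : Ordinal → Ordinal) (CC : Ordinal → Ordinal → Set Ordinal),
        (∀ α, Order.IsSuccLimit α → ∀ x, α ≤ (P x).top → IM α = (P x).iMin α) ∧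
        (∀ α, Order.IsSuccLimit α → ∀ x, α ≤ (P x).top → ∀ i, (P x).iMin α ≤ i → i < kap.ord →
          CC α i = (P x).C α i) ∧
        IM γ = istar ∧ (∀ i, CC γ i = ⋃ x, (P x).C (P x).top i) := by
    refine ⟨fun α => if h : ∃ x, α ≤ (P x).top then (P h.choose).iMin α else istar,
      fun α i => if h : ∃ x, α ≤ (P x).top then (P h.choose).C α i
        else ⋃ x, (P x).C (P x).top i, ?_, ?_, ?_, fun i => ?_⟩
    · intro α hl x hx
      dsimp only
      rw [dif_pos ⟨x, hx⟩]
      exact (hag _ (hPD _) _ (hPD _) α (Exists.choose_spec (⟨x, hx⟩ : ∃ x, α ≤ (P x).top))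
        hx hl).1
    · intro α hl x hx i hi hik
      dsimp only
      rw [dif_pos ⟨x, hx⟩]
      have h1 := hag _ (hPD (Exists.choose (⟨x, hx⟩ : ∃ x, α ≤ (P x).top))) _ (hPD x) α
        (Exists.choose_spec (⟨x, hx⟩ : ∃ x, α ≤ (P x).top)) hx hl
      exact h1.2 i (by rw [h1.1]; exact hi) hik
    · dsimp only
      rw [dif_neg hnotγ]
    · dsimp only
      rw [dif_neg hnotγ]
  have heqγ : ∀ α, α ≤ γ → (¬∃ x, α ≤ (P x).top) → α = γ := by
    intro α hαγ hno
    rcases eq_or_lt_of_le hαγ with h | h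
    · exact h
    · obtain ⟨x, hx⟩ := hexlt α h
      exact absurd ⟨x, le_of_lt hx⟩ hno
  refine ⟨⟨γ, IM, CC, hγlam, hγlim, ?_, ?_, ?_, ?_, ?_⟩, ?_⟩
  · -- iMin_lt
    intro α hαγ hl
    by_cases h : ∃ x, α ≤ (P x).top
    · obtain ⟨x, hx⟩ := h
      rw [hIMeq α hl x hx]
      exact (P x).iMin_lt α hx hl
    · rw [heqγ α hαγ h, hIMγ]
      exact histar_lt
  · -- club
    intro α hαγ hl i hi hik
    by_cases h : ∃ x, α ≤ (P x).top
    · obtain ⟨x, hx⟩ := h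
      rw [hIMeq α hl x hx] at hi
      rw [hCCeq α hl x hx i hi hik]
      exact (P x).club α hx hl i hi hik
    · have hαe := heqγ α hαγ h
      rw [hαe] at hi ⊢
      rw [hIMγ] at hi
      rw [hCCγ]
      refine ⟨?_, ?_, ?_⟩
      · intro δ hδ
        rw [Set.mem_iUnion] at hδ
        obtain ⟨x, hδ⟩ := hδ
        have hcl := (P x).club _ le_rfl (P x).top_isLimit i (le_trans (hjle x) hi) hik
        exact lt_trans (hcl.1 hδ) (hlt x)
      · intro β hβ
        obtain ⟨x, hx⟩ := hexlt β hβ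
        have hcl := (P x).club _ le_rfl (P x).top_isLimit i (le_trans (hjle x) hi) hik
        obtain ⟨c, hc, hbc⟩ := hcl.2.1 β hx
        exact ⟨c, Set.mem_iUnion.mpr ⟨x, hc⟩, hbc⟩
      · intro β hβ hβ0 hsup
        obtain ⟨x, hx⟩ := hexlt β hβ
        have hcl := (P x).club _ le_rfl (P x).top_isLimit i (le_trans (hjle x) hi) hik
        rw [hres i hi hik x β hx] at hsup
        exact Set.mem_iUnion.mpr ⟨x, hcl.2.2 β hx hβ0 hsup⟩
  · -- mono
    intro α hαγ hl i j hi hij hjk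
    have hik : i < kap.ord := lt_of_le_of_lt hij hjk
    by_cases h : ∃ x, α ≤ (P x).top
    · obtain ⟨x, hx⟩ := h
      rw [hIMeq α hl x hx] at hi
      rw [hCCeq α hl x hx i hi hik, hCCeq α hl x hx j (le_trans hi hij) hjk]
      exact (P x).mono α hx hl i j hi hij hjk
    · have hαe := heqγ α hαγ h
      rw [hαe] at hi ⊢
      rw [hIMγ] at hi
      rw [hCCγ i, hCCγ j]
      exact Set.iUnion_mono fun x => (P x).mono _ le_rfl (P x).top_isLimit i j
        (le_trans (hjle x) hi) hij hjk
  · -- coherent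
    intro α β hαβ hβγ hlα hlβ i hi hik hlp
    by_cases h : ∃ x, β ≤ (P x).top
    · obtain ⟨x, hx⟩ := h
      rw [hIMeq β hlβ x hx] at hi
      rw [hCCeq β hlβ x hx i hi hik] at hlp ⊢
      have hαx : α ≤ (P x).top := le_trans (le_of_lt hαβ) hx
      obtain ⟨him, hcoh⟩ := (P x).coherent α β hαβ hx hlα hlβ i hi hik hlp
      rw [hIMeq α hlα x hαx, hCCeq α hlα x hαx i him hik]
      exact ⟨him, hcoh⟩
    · have hβe := heqγ β hβγ h
      rw [hβe] at hi hlp ⊢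
      rw [hIMγ] at hi
      rw [hCCγ] at hlp ⊢
      obtain ⟨x, hαx⟩ := Set.mem_iUnion.mp hlp.1
      have hcl := (P x).club _ le_rfl (P x).top_isLimit i (le_trans (hjle x) hi) hik
      have hαtx : α < (P x).top := hcl.1 hαx
      have hlp' : IsLimitPt α ((P x).C (P x).top i) := by
        refine ⟨hαx, ?_⟩
        have h2 := hlp.2
        rw [hres i hi hik x α hαtx] at h2
        exact h2
      obtain ⟨him, hcoh⟩ := (P x).coherent α (P x).top hαtx le_rfl hlα
        (P x).top_isLimit i (le_trans (hjle x) hi) hik hlp'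
      rw [hIMeq α hlα x (le_of_lt hαtx), hCCeq α hlα x (le_of_lt hαtx) i him hik]
      refine ⟨him, ?_⟩
      rw [hres i hi hik x α hαtx]
      exact hcoh
  · -- covers
    intro α β hαβ hβγ hlα hlβ
    by_cases h : ∃ x, β ≤ (P x).top
    · obtain ⟨x, hx⟩ := h
      obtain ⟨i, hi, hik, hlp⟩ := (P x).covers α β hαβ hx hlα hlβ
      refine ⟨i, ?_, hik, ?_⟩
      · rw [hIMeq β hlβ x hx]; exact hi
      · rw [hCCeq β hlβ x hx i hi hik]; exact hlp
    · have hβe := heqγ β hβγ h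
      rw [hβe] at hαβ ⊢
      obtain ⟨x, hx⟩ := hexlt α hαβ
      obtain ⟨j, hj, hjk, hlp⟩ := (P x).covers α (P x).top hx le_rfl hlα
        (P x).top_isLimit
      refine ⟨max j istar, ?_, max_lt hjk histar_lt, ?_⟩
      · rw [hIMγ]; exact le_max_right _ _
      · have hik : max j istar < kap.ord := max_lt hjk histar_lt
        have hlp' : IsLimitPt α ((P x).C (P x).top (max j istar)) :=
          IsLimitPt.mono' hlα.ne_zero
            ((P x).mono _ le_rfl (P x).top_isLimit j (max j istar) hj
              (le_max_left _ _) hik) hlp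
        rw [hCCγ]
        refine ⟨Set.mem_iUnion.mpr ⟨x, hlp'.1⟩, ?_⟩
        rw [hres (max j istar) (le_max_right _ _) hik x α hx]
        exact hlp'.2
  · -- lower bound
    intro p hp
    have hPx : P (e.symm ⟨p, hp⟩) = p := by simp [hP_def]
    refine ⟨?_, fun α hα hl => ?_, fun α hα hl i hi hik => ?_⟩
    · exact hPx ▸ hle (e.symm ⟨p, hp⟩)
    · rw [← hPx] at hα ⊢
      exact hIMeq α hl _ hα
    · rw [← hPx] at hα hi ⊢
      exact hCCeq α hl _ hα i hi hik

end Paper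
end
end

section
/- Let κ < λ be infinite regular cardinals. The poset ℙ(λ,κ) is λ-strategically closed: Player II has a winning strategy in the game G_λ(ℙ(λ,κ)). -/
noncomputable section

open Cardinal Set

namespace Paper

/-- An even ordinal: of the form `α + 2n` with `α` zero or a limit ordinal.
In particular all limit ordinals and `0` are even. -/
def EvenOrd (ξ : Ordinal) : Prop :=
  ∃ (α : Ordinal) (n : ℕ), (α = 0 ∨ Order.IsSuccLimit α) ∧ ξ = α + 2 * (n : Ordinal)

/-- `σ` is a winning strategy for Player II in the game `G_β` on `(P, le)`:
`σ` depends only on the play so far, and whenever `0 < ξ < β` is an even stage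
and the play so far is a decreasing sequence of conditions in which II has
followed `σ` at all earlier even stages, then `σ` produces a legal move, i.e.
a lower bound for the play so far.  (Stage `0`, where II plays the trivial
top condition `1`, is ignored; this is the standard reading for posets
without a maximum element.) -/
def IsWinningStratII {P : Type*} (le : P → P → Prop) (β : Ordinal)
    (σ : (Ordinal → P) → Ordinal → P) : Prop :=
  (∀ f g ξ, (∀ η < ξ, f η = g η) → σ f ξ = σ g ξ) ∧
  ∀ (f : Ordinal → P) (ξ : Ordinal), 0 < ξ → ξ < β → EvenOrd ξ →
    (∀ η₁ η₂, 0 < η₁ → η₁ < η₂ → η₂ < ξ → le (f η₂) (f η₁)) →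
    (∀ η, 0 < η → η < ξ → EvenOrd η → f η = σ f η) →
    ∀ η, 0 < η → η < ξ → le (σ f ξ) (f η)

/-- `(P, le)` is `β`-strategically closed: Player II has a winning strategy
in the game `G_β(P)`. -/
def StratClosed (P : Type*) (le : P → P → Prop) (β : Ordinal) : Prop :=
  ∃ σ, IsWinningStratII le β σ


section Util

open Ordinal

lemma bddAbove_of_subset_Iio {s : Set Ordinal} {a : Ordinal} (h : s ⊆ Set.Iio a) :
    BddAbove s := ⟨a, fun _ hx => (h hx).le⟩

lemma sSup_le_of_subset_Iio {s : Set Ordinal} {a : Ordinal} (h : s ⊆ Set.Iio a) :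
    sSup s ≤ a := by
  rcases s.eq_empty_or_nonempty with rfl | hne
  · simp [csSup_empty]
  · exact csSup_le hne fun x hx => (h hx).le

lemma IsClubIn.sSup_eq {C : Set Ordinal} {a : Ordinal} (h : IsClubIn C a) (ha : Order.IsSuccLimit a) :
    sSup C = a := by
  refine le_antisymm (sSup_le_of_subset_Iio h.1) ?_
  by_contra hlt
  push_neg at hlt
  obtain ⟨b, hbC, hb⟩ := h.2.1 _ (ha.succ_lt hlt)
  exact (Order.lt_succ (sSup C)).not_ge
    (hb.trans (le_csSup (bddAbove_of_subset_Iio h.1) hbC))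

lemma isLimitPt_of_inter_eq {γ : Ordinal} {C D : Set Ordinal} (h : IsLimitPt γ C)
    (hmem : γ ∈ D) (heq : D ∩ Set.Iio γ = C ∩ Set.Iio γ) : IsLimitPt γ D :=
  ⟨hmem, by rw [heq]; exact h.2⟩

lemma IsLimitPt.mono {γ : Ordinal} {C D : Set Ordinal} (h : IsLimitPt γ C) (hCD : C ⊆ D) :
    IsLimitPt γ D := by
  refine ⟨hCD h.1, le_antisymm (sSup_le_of_subset_Iio Set.inter_subset_right) ?_⟩
  calc γ = sSup (C ∩ Set.Iio γ) := h.2.symm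
    _ ≤ sSup (D ∩ Set.Iio γ) := by
        rcases (C ∩ Set.Iio γ).eq_empty_or_nonempty with he | hne
        · rw [he]; simp [csSup_empty]
        · exact csSup_le_csSup (bddAbove_of_subset_Iio Set.inter_subset_right) hne
            (Set.inter_subset_inter_left _ hCD)

/-- A club has its (limit) top as supremum, so the top is a "limit point" of any
superset containing it. -/
lemma IsClubIn.isLimitPt_top {C D : Set Ordinal} {a : Ordinal} (h : IsClubIn C a)
    (ha : Order.IsSuccLimit a) (hmem : a ∈ D) (heq : D ∩ Set.Iio a = C) : IsLimitPt a D := by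
  refine ⟨hmem, ?_⟩
  rw [heq]
  exact h.sSup_eq ha

lemma limit_le_of_lt_add_omega {δ α : Ordinal} (hα : Order.IsSuccLimit α) (h : α < δ + ω) : α ≤ δ := by
  by_contra hlt
  push_neg at hlt
  have hsub : δ + (α - δ) = α := Ordinal.add_sub_cancel_of_le hlt.le
  have h1 : α - δ < ω := by
    have h' : δ + (α - δ) < δ + ω := by rw [hsub]; exact h
    exact (add_lt_add_iff_left δ).mp h'
  obtain ⟨n, hn⟩ := Ordinal.lt_omega0.mp h1
  cases n with
  | zero =>
      rw [hn] at hsub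
      simp at hsub
      exact hlt.ne hsub
  | succ m =>
      rw [hn] at hsub
      have : α = Order.succ (δ + m) := by
        rw [← hsub]
        push_cast
        rw [← add_assoc, Ordinal.add_one_eq_succ]
      exact Order.not_isSuccLimit_succ _ (this ▸ hα)

lemma evenOrd_zero : EvenOrd 0 := ⟨0, 0, Or.inl rfl, by simp⟩

lemma evenOrd_limit {ξ : Ordinal} (h : Order.IsSuccLimit ξ) : EvenOrd ξ := ⟨ξ, 0, Or.inr h, by simp⟩

lemma evenOrd_add_two {θ : Ordinal} (h : EvenOrd θ) : EvenOrd (θ + 2) := by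
  obtain ⟨α, n, hα, rfl⟩ := h
  refine ⟨α, n + 1, hα, ?_⟩
  push_cast
  rw [mul_add, mul_one, add_assoc]

lemma even_two_le {θ : Ordinal} (h : EvenOrd θ) (h0 : θ ≠ 0) : 2 ≤ θ := by
  obtain ⟨α, n, hα, rfl⟩ := h
  rcases hα with rfl | hα
  · rw [zero_add] at h0 ⊢
    have hn : n ≠ 0 := by rintro rfl; simp at h0
    have : (1 : Ordinal) ≤ (n : Ordinal) := by
      exact_mod_cast Nat.one_le_iff_ne_zero.mpr hn
    calc (2 : Ordinal) = 2 * 1 := (mul_one 2).symm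
      _ ≤ 2 * n := mul_le_mul_right this 2
  · have h2 : (2 : Ordinal) ≤ ω := by
      have := (Ordinal.natCast_lt_omega0 2).le
      simpa using this
    exact le_trans (h2.trans (omega0_le_of_isSuccLimit hα)) (le_self_add)

lemma even_succ_form {ξ : Ordinal} (h : EvenOrd ξ) (h0 : ξ ≠ 0) (hnl : ¬ Order.IsSuccLimit ξ) :
    ∃ θ, EvenOrd θ ∧ ξ = θ + 2 := by
  obtain ⟨α, n, hα, rfl⟩ := h
  cases n with
  | zero =>
      exfalso
      simp only [Nat.cast_zero, mul_zero, add_zero] at h0 hnl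
      rcases hα with rfl | hα
      · exact h0 rfl
      · exact hnl hα
  | succ m =>
      refine ⟨α + 2 * m, ⟨α, m, hα, rfl⟩, ?_⟩
      push_cast
      rw [mul_add, mul_one, add_assoc]

lemma even_or_odd (ξ : Ordinal) : EvenOrd ξ ∨ ∃ θ, EvenOrd θ ∧ ξ = θ + 1 := by
  induction ξ using Ordinal.limitRecOn with
  | zero => exact Or.inl evenOrd_zero
  | add_one o ih =>
      rcases ih with h | ⟨θ, hθ, rfl⟩
      · exact Or.inr ⟨o, h, rfl⟩
      · left
        have : θ + 1 + 1 = θ + 2 := by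
          rw [add_assoc, one_add_one_eq_two]
        rw [this]
        exact evenOrd_add_two hθ
  | limit o ho _ => exact Or.inl (evenOrd_limit ho)

lemma even_not_one : ¬ EvenOrd 1 := by
  rintro ⟨α, n, hα, heq⟩
  rcases hα with rfl | hα
  · rw [zero_add] at heq
    have h1 : (1 : ℕ) = 2 * n := by exact_mod_cast heq
    omega
  · have h1 : ω ≤ (1 : Ordinal) := by
      calc ω ≤ α := omega0_le_of_isSuccLimit hα
        _ ≤ α + 2 * n := le_self_add
        _ = 1 := heq.symm
    exact Ordinal.one_lt_omega0.not_ge h1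

end Util

section OrderLemmas

open Ordinal

variable {lam kap : Cardinal.{0}}

lemma pext_refl (p : PCond lam kap) : PExt p p :=
  ⟨le_rfl, fun _ _ _ => rfl, fun _ _ _ _ _ _ => rfl⟩

lemma pext_trans {r q p : PCond lam kap} (h1 : PExt r q) (h2 : PExt q p) : PExt r p := by
  obtain ⟨ht1, hm1, hc1⟩ := h1
  obtain ⟨ht2, hm2, hc2⟩ := h2
  refine ⟨ht2.trans ht1, fun α hα hl => ?_, fun α hα hl i hi hiκ => ?_⟩
  · rw [hm1 α (hα.trans ht2) hl, hm2 α hα hl]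
  · rw [hc1 α (hα.trans ht2) hl i (by rw [hm2 α hα hl]; exact hi) hiκ,
      hc2 α hα hl i hi hiκ]

lemma sSup_le_of_subset_Iic {s : Set Ordinal} {a : Ordinal} (h : s ⊆ Set.Iic a) :
    sSup s ≤ a := by
  rcases s.eq_empty_or_nonempty with rfl | hne
  · simp [csSup_empty]
  · exact csSup_le hne fun x hx => h hx

def defaultCond (lam kap : Cardinal.{0}) (hω : ω < lam.ord) (hκ : 0 < kap.ord) :
    PCond lam kap where
  top := ω
  iMin := fun _ => 0
  C := fun _ _ => Set.Ioo 0 ω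
  top_lt := hω
  top_isLimit := Ordinal.isSuccLimit_omega0
  iMin_lt := fun _ _ _ => hκ
  club := by
    intro α hα hαl i _ _
    have hαω : α = ω := le_antisymm hα (Ordinal.omega0_le_of_isSuccLimit hαl)
    subst hαω
    refine ⟨fun x hx => hx.2, fun γ hγ => ?_, fun γ hγ h0 _ => ⟨h0, hγ⟩⟩
    exact ⟨γ + 1, ⟨lt_of_le_of_lt ((zero_le (a := γ))) (lt_add_of_pos_right γ zero_lt_one),
      Ordinal.isSuccLimit_omega0.succ_lt hγ⟩, le_of_lt (lt_add_of_pos_right γ zero_lt_one)⟩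
  mono := fun _ _ _ _ _ _ _ _ => subset_rfl
  coherent := by
    intro α β hαβ hβ hαl hβl i _ _ _
    exact absurd (lt_of_lt_of_le hαβ hβ) (Ordinal.omega0_le_of_isSuccLimit hαl).not_gt
  covers := by
    intro α β hαβ hβ hαl hβl
    exact absurd (lt_of_lt_of_le hαβ hβ) (Ordinal.omega0_le_of_isSuccLimit hαl).not_gt

/-- Hypotheses for the successor-stage extension of a condition `q` with designated
"thread base" `b` and threshold `j₀`. -/
structure ExtHyp (q : PCond lam kap) (b j₀ : Ordinal) : Prop where
  hb : Order.IsSuccLimit b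
  hble : b ≤ q.top
  hjm : q.iMin q.top ≤ j₀
  hbm : q.iMin b ≤ j₀
  hjκ : j₀ < kap.ord
  hfresh : ∀ i, j₀ ≤ i → i < kap.ord → b = q.top ∨ IsLimitPt b (q.C q.top i)

variable {q : PCond lam kap} {b j₀ : Ordinal}

/-- The "anchor" of column `i` of the new top row. -/
def extX (q : PCond lam kap) (b j₀ : Ordinal) (i : Ordinal) : Ordinal :=
  if i < j₀ then b else q.top

/-- Column `i` of the new top row. -/
def extC (q : PCond lam kap) (b j₀ : Ordinal) (i : Ordinal) : Set Ordinal :=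
  (if q.iMin b ≤ i then q.C (extX q b j₀ i) i ∪ {extX q b j₀ i} else ∅) ∪
    Set.Ioo q.top (q.top + ω)

lemma extX_le (H : ExtHyp q b j₀) (i : Ordinal) : extX q b j₀ i ≤ q.top := by
  unfold extX; split
  · exact H.hble
  · exact le_rfl

lemma extX_limit (H : ExtHyp q b j₀) (i : Ordinal) : Order.IsSuccLimit (extX q b j₀ i) := by
  unfold extX; split
  · exact H.hb
  · exact q.top_isLimit

lemma extX_iMin_le (H : ExtHyp q b j₀) {i : Ordinal} (hg : q.iMin b ≤ i) :
    q.iMin (extX q b j₀ i) ≤ i := by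
  unfold extX
  split_ifs with h
  · exact hg
  · exact H.hjm.trans (not_lt.mp h)

lemma top_lt_top_add_omega (q : PCond lam kap) : q.top < q.top + ω :=
  lt_add_of_pos_right _ Ordinal.omega0_pos

/-- The part of a new column below any `α ≤ q.top` ignores the `Ioo` tail. -/
lemma extC_inter_Iio {i α : Ordinal} (hα : α ≤ q.top) :
    extC q b j₀ i ∩ Set.Iio α =
      (if q.iMin b ≤ i then q.C (extX q b j₀ i) i ∪ {extX q b j₀ i} else ∅) ∩ Set.Iio α := by
  unfold extC
  ext x
  simp only [Set.mem_inter_iff, Set.mem_union, Set.mem_Ioo, Set.mem_Iio]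
  constructor
  · rintro ⟨hx | hx, hxα⟩
    · exact ⟨hx, hxα⟩
    · exact absurd (lt_of_lt_of_le (hxα.trans_le hα) le_rfl) (not_lt.mpr hx.1.le)
  · rintro ⟨hx, hxα⟩
    exact ⟨Or.inl hx, hxα⟩

/-- Below `b`, the new column `i` agrees with `q`'s row at `b` (when the guard holds). -/
lemma extC_trace (H : ExtHyp q b j₀) {i : Ordinal} (hg : q.iMin b ≤ i) (hiκ : i < kap.ord) :
    extC q b j₀ i ∩ Set.Iio b = q.C b i := by
  rw [extC_inter_Iio H.hble, if_pos hg]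
  unfold extX
  split_ifs with h
  · -- thread column, anchor b
    have hsub : q.C b i ⊆ Set.Iio b := (q.club b H.hble H.hb i hg hiκ).1
    ext x
    simp only [Set.mem_inter_iff, Set.mem_union, Set.mem_singleton_iff, Set.mem_Iio]
    constructor
    · rintro ⟨hx | rfl, hxb⟩
      · exact hx
      · exact absurd hxb (lt_irrefl _)
    · intro hx
      exact ⟨Or.inl hx, hsub hx⟩
  · -- fresh column, anchor q.top
    rcases H.hfresh i (not_lt.mp h) hiκ with heq | hlp
    · subst heq
      have hsub : q.C q.top i ⊆ Set.Iio q.top :=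
        (q.club q.top le_rfl q.top_isLimit i hg hiκ).1
      ext x
      simp only [Set.mem_inter_iff, Set.mem_union, Set.mem_singleton_iff, Set.mem_Iio]
      constructor
      · rintro ⟨hx | rfl, hxb⟩
        · exact hx
        · exact absurd hxb (lt_irrefl _)
      · intro hx
        exact ⟨Or.inl hx, hsub hx⟩
    · have hblt : b < q.top := (q.club q.top le_rfl q.top_isLimit i (H.hjm.trans (not_lt.mp h)) hiκ).1 hlp.1
      have hco := (q.coherent b q.top hblt le_rfl H.hb q.top_isLimit i
        (H.hjm.trans (not_lt.mp h)) hiκ hlp).2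
      rw [← hco]
      ext x
      simp only [Set.mem_inter_iff, Set.mem_union, Set.mem_singleton_iff, Set.mem_Iio]
      constructor
      · rintro ⟨hx | rfl, hxb⟩
        · exact ⟨hx, hxb⟩
        · exact absurd hxb (not_lt.mpr hblt.le)
      · rintro ⟨hx, hxb⟩
        exact ⟨Or.inl hx, hxb⟩

/-- The new column is a club in the new top. -/
lemma extC_club (H : ExtHyp q b j₀) {i : Ordinal} (hiκ : i < kap.ord) :
    IsClubIn (extC q b j₀ i) (q.top + ω) := by
  have hxle := extX_le H i
  have hxlim := extX_limit H i
  refine ⟨?_, ?_, ?_⟩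
  · -- subset
    rintro x (hx | hx)
    · split at hx
      case isTrue hg =>
        rcases hx with hx | rfl
        · exact lt_trans (lt_of_lt_of_le ((q.club _ hxle hxlim i
            (extX_iMin_le H hg) hiκ).1 hx) hxle) (top_lt_top_add_omega q)
        · exact lt_of_le_of_lt hxle (top_lt_top_add_omega q)
      case isFalse => exact absurd hx (Set.notMem_empty x)
    · exact hx.2
  · -- unbounded
    intro γ hγ
    by_cases hγt : γ ≤ q.top
    · refine ⟨q.top + 1, Or.inr ⟨lt_add_of_pos_right _ zero_lt_one, ?_⟩, ?_⟩
      · exact (add_lt_add_iff_left q.top).mpr Ordinal.one_lt_omega0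
      · exact hγt.trans (le_of_lt (lt_add_of_pos_right _ zero_lt_one))
    · exact ⟨γ, Or.inr ⟨not_le.mp hγt, hγ⟩, le_rfl⟩
  · -- closed
    intro γ hγ h0 hsup
    by_cases hγt : q.top < γ
    · exact Or.inr ⟨hγt, hγ⟩
    · push_neg at hγt
      rw [extC_inter_Iio hγt] at hsup
      by_cases hg : q.iMin b ≤ i
      · rw [if_pos hg] at hsup
        by_cases hγx : γ ≤ extX q b j₀ i
        · rcases eq_or_lt_of_le hγx with rfl | hγx'
          · exact Or.inl (by rw [if_pos hg]; exact Or.inr rfl)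
          · -- γ < x : use closedness of q's club at x
            have hset : (q.C (extX q b j₀ i) i ∪ {extX q b j₀ i}) ∩ Set.Iio γ
                = q.C (extX q b j₀ i) i ∩ Set.Iio γ := by
              ext x
              simp only [Set.mem_inter_iff, Set.mem_union, Set.mem_singleton_iff, Set.mem_Iio]
              constructor
              · rintro ⟨hx | rfl, hxγ⟩
                · exact ⟨hx, hxγ⟩
                · exact absurd hxγ (not_lt.mpr hγx)
              · rintro ⟨hx, hxγ⟩; exact ⟨Or.inl hx, hxγ⟩
            rw [hset] at hsup
            have := (q.club _ hxle hxlim i (extX_iMin_le H hg) hiκ).2.2 γ hγx' h0 hsup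
            exact Or.inl (by rw [if_pos hg]; exact Or.inl this)
        · -- x < γ : sup is at most x < γ, contradiction
          exfalso
          push_neg at hγx
          have : sSup ((q.C (extX q b j₀ i) i ∪ {extX q b j₀ i}) ∩ Set.Iio γ)
              ≤ extX q b j₀ i := by
            refine sSup_le_of_subset_Iic ?_
            rintro x ⟨hx | rfl, _⟩
            · exact Set.mem_Iic.mpr
                (Set.mem_Iio.mp ((q.club _ hxle hxlim i (extX_iMin_le H hg) hiκ).1 hx)).le
            · exact Set.mem_Iic.mpr le_rfl
          rw [hsup] at this
          exact absurd this (not_le.mpr hγx)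
      · rw [if_neg hg] at hsup
        simp only [Set.empty_inter, csSup_empty] at hsup
        exact absurd hsup.symm (ne_of_gt h0)

end OrderLemmas

section ExtCond

open Ordinal

variable {lam kap : Cardinal.{0}} {q : PCond lam kap} {b j₀ : Ordinal}

/-- Monotonicity of the new top row. -/
lemma extC_mono (H : ExtHyp q b j₀) {i j : Ordinal} (hij : i ≤ j) (hjκ : j < kap.ord) :
    extC q b j₀ i ⊆ extC q b j₀ j := by
  unfold extC
  apply Set.union_subset_union_left
  by_cases hg : q.iMin b ≤ i
  · rw [if_pos hg, if_pos (hg.trans hij)]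
    unfold extX
    by_cases hi : i < j₀
    · rw [if_pos hi]
      by_cases hj : j < j₀
      · rw [if_pos hj]
        exact Set.union_subset_union_left _ (q.mono b H.hble H.hb i j hg hij hjκ)
      · rw [if_neg hj]
        rcases H.hfresh j (not_lt.mp hj) hjκ with heq | hlp
        · rw [← heq]
          exact Set.union_subset_union_left _ (q.mono b H.hble H.hb i j hg hij hjκ)
        · have hblt : b < q.top := Set.mem_Iio.mp
            ((q.club q.top le_rfl q.top_isLimit j (H.hjm.trans (not_lt.mp hj)) hjκ).1 hlp.1)
          have hco := (q.coherent b q.top hblt le_rfl H.hb q.top_isLimit j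
            (H.hjm.trans (not_lt.mp hj)) hjκ hlp).2
          rintro x (hx | rfl)
          · left
            have hx' : x ∈ q.C b j := q.mono b H.hble H.hb i j hg hij hjκ hx
            rw [← hco] at hx'
            exact hx'.1
          · exact Or.inl hlp.1
    · rw [if_neg hi]
      have hj : ¬ j < j₀ := fun h => hi (lt_of_le_of_lt hij h)
      rw [if_neg hj]
      exact Set.union_subset_union_left _
        (q.mono q.top le_rfl q.top_isLimit i j (H.hjm.trans (not_lt.mp hi)) hij hjκ)
  · rw [if_neg hg]
    exact Set.empty_subset _

lemma extC_inter_self (H : ExtHyp q b j₀) {i : Ordinal} (hiκ : i < kap.ord)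
    (hg : q.iMin b ≤ i) (hx : extX q b j₀ i = q.top) :
    extC q b j₀ i ∩ Set.Iio q.top = q.C q.top i := by
  have hiM : q.iMin q.top ≤ i := by
    have := extX_iMin_le H hg
    rwa [hx] at this
  have hCsub : q.C q.top i ⊆ Set.Iio q.top := (q.club q.top le_rfl q.top_isLimit i hiM hiκ).1
  rw [extC_inter_Iio le_rfl, if_pos hg, hx]
  ext y
  simp only [Set.mem_inter_iff, Set.mem_union, Set.mem_singleton_iff, Set.mem_Iio]
  constructor
  · rintro ⟨hy | rfl, hyα⟩
    · exact hy
    · exact absurd hyα (lt_irrefl _)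
  · intro hy
    exact ⟨Or.inl hy, Set.mem_Iio.mp (hCsub hy)⟩

/-- The successor-stage extension of `q`. -/
def extCond (q : PCond lam kap) (b j₀ : Ordinal) (H : ExtHyp q b j₀)
    (hwl : ℵ₀ < lam) : PCond lam kap where
  top := q.top + ω
  iMin := fun α => if α = q.top + ω then 0 else q.iMin α
  C := fun α i => if α = q.top + ω then extC q b j₀ i else q.C α i
  top_lt := by
    rw [Cardinal.lt_ord, Ordinal.card_add, Ordinal.card_omega0]
    exact Cardinal.add_lt_of_lt hwl.le (Cardinal.lt_ord.mp q.top_lt) hwl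
  top_isLimit := Ordinal.isSuccLimit_add q.top Ordinal.isSuccLimit_omega0
  iMin_lt := by
    intro α hα hαl
    by_cases htop : α = q.top + ω
    · rw [if_pos htop]
      exact lt_of_le_of_lt ((zero_le (a := j₀))) H.hjκ
    · rw [if_neg htop]
      exact q.iMin_lt α (limit_le_of_lt_add_omega hαl (lt_of_le_of_ne hα htop)) hαl
  club := by
    intro α hα hαl i hiM hiκ
    by_cases htop : α = q.top + ω
    · subst htop
      rw [if_pos rfl]
      exact extC_club H hiκ
    · rw [if_neg htop]
      rw [if_neg htop] at hiM
      exact q.club α (limit_le_of_lt_add_omega hαl (lt_of_le_of_ne hα htop)) hαl i hiM hiκ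
  mono := by
    intro α hα hαl i j hiM hij hjκ
    by_cases htop : α = q.top + ω
    · subst htop
      rw [if_pos rfl, if_pos rfl]
      exact extC_mono H hij hjκ
    · rw [if_neg htop, if_neg htop]
      rw [if_neg htop] at hiM
      exact q.mono α (limit_le_of_lt_add_omega hαl (lt_of_le_of_ne hα htop)) hαl i j hiM hij hjκ
  coherent := by
    intro α β hαβ hβ hαl hβl i hiM hiκ hlp
    by_cases hβtop : β = q.top + ω
    · subst hβtop
      have hαq : α ≤ q.top := limit_le_of_lt_add_omega hαl hαβ
      have hαne : α ≠ q.top + ω := ne_of_lt hαβ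
      rw [if_pos rfl] at hlp
      rw [if_pos rfl, if_neg hαne, if_neg hαne]
      have hg : q.iMin b ≤ i := by
        by_contra hg
        have hm := hlp.1
        unfold extC at hm
        rw [if_neg hg] at hm
        rcases hm with h | h
        · exact h
        · exact absurd h.1 (not_lt.mpr hαq)
      have hxle := extX_le H i
      have hxlim := extX_limit H i
      have hxM := extX_iMin_le H (i := i) hg
      have hCsub : q.C (extX q b j₀ i) i ⊆ Set.Iio (extX q b j₀ i) :=
        (q.club _ hxle hxlim i hxM hiκ).1
      have hαx : α ≤ extX q b j₀ i := by
        by_contra hαx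
        push_neg at hαx
        have hle : sSup (extC q b j₀ i ∩ Set.Iio α) ≤ extX q b j₀ i := by
          rw [extC_inter_Iio hαq, if_pos hg]
          refine sSup_le_of_subset_Iic ?_
          rintro y ⟨hy | rfl, _⟩
          · exact Set.mem_Iic.mpr (Set.mem_Iio.mp (hCsub hy)).le
          · exact Set.mem_Iic.mpr le_rfl
        rw [hlp.2] at hle
        exact absurd hle (not_le.mpr hαx)
      have hmem : α ∈ q.C (extX q b j₀ i) i ∪ {extX q b j₀ i} := by
        have hm := hlp.1
        unfold extC at hm
        rw [if_pos hg] at hm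
        rcases hm with h | h
        · exact h
        · exact absurd h.1 (not_lt.mpr hαq)
      rcases eq_or_lt_of_le hαx with heq | hαx'
      · -- α is the anchor
        subst heq
        refine ⟨hxM, ?_⟩
        rw [extC_inter_Iio hαq, if_pos hg]
        ext y
        simp only [Set.mem_inter_iff, Set.mem_union, Set.mem_singleton_iff, Set.mem_Iio]
        constructor
        · rintro ⟨hy | rfl, hyα⟩
          · exact hy
          · exact absurd hyα (lt_irrefl _)
        · intro hy
          exact ⟨Or.inl hy, Set.mem_Iio.mp (hCsub hy)⟩
      · -- α is below the anchor
        have hmem' : α ∈ q.C (extX q b j₀ i) i := by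
          rcases hmem with h | h
          · exact h
          · exact absurd h (ne_of_lt hαx')
        have htr : extC q b j₀ i ∩ Set.Iio α = q.C (extX q b j₀ i) i ∩ Set.Iio α := by
          rw [extC_inter_Iio hαq, if_pos hg]
          ext y
          simp only [Set.mem_inter_iff, Set.mem_union, Set.mem_singleton_iff, Set.mem_Iio]
          constructor
          · rintro ⟨hy | rfl, hyα⟩
            · exact ⟨hy, hyα⟩
            · exact absurd hyα (not_lt.mpr hαx)
          · rintro ⟨hy, hyα⟩
            exact ⟨Or.inl hy, hyα⟩
        have hlp' : IsLimitPt α (q.C (extX q b j₀ i) i) :=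
          ⟨hmem', by rw [← htr]; exact hlp.2⟩
        obtain ⟨h1, h2⟩ := q.coherent α (extX q b j₀ i) hαx' hxle hαl hxlim i hxM hiκ hlp'
        exact ⟨h1, by rw [htr, h2]⟩
    · have hβ' : β ≤ q.top := limit_le_of_lt_add_omega hβl (lt_of_le_of_ne hβ hβtop)
      have hαne : α ≠ q.top + ω :=
        ne_of_lt (lt_of_lt_of_le hαβ (hβ'.trans (top_lt_top_add_omega q).le))
      rw [if_neg hβtop] at hlp hiM
      rw [if_neg hβtop, if_neg hαne, if_neg hαne]
      exact q.coherent α β hαβ hβ' hαl hβl i hiM hiκ hlp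
  covers := by
    intro α β hαβ hβ hαl hβl
    by_cases hβtop : β = q.top + ω
    · subst hβtop
      have hαq : α ≤ q.top := limit_le_of_lt_add_omega hαl hαβ
      have hx : extX q b j₀ j₀ = q.top := by
        unfold extX; rw [if_neg (lt_irrefl j₀)]
      rcases eq_or_lt_of_le hαq with heq | hαq'
      · subst heq
        refine ⟨j₀, ?_, H.hjκ, ?_⟩
        · rw [if_pos rfl]; exact (zero_le (a := j₀))
        · rw [if_pos rfl]
          refine ⟨?_, ?_⟩
          · unfold extC
            rw [if_pos H.hbm, hx]
            exact Or.inl (Or.inr rfl)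
          · rw [extC_inter_self H H.hjκ H.hbm hx]
            exact (q.club _ le_rfl q.top_isLimit j₀ H.hjm H.hjκ).sSup_eq q.top_isLimit
      · obtain ⟨i₁, hm, hκ1, hlp⟩ := q.covers α q.top hαq' le_rfl hαl q.top_isLimit
        have hκ2 : max i₁ j₀ < kap.ord := max_lt hκ1 H.hjκ
        refine ⟨max i₁ j₀, ?_, hκ2, ?_⟩
        · rw [if_pos rfl]; exact zero_le
        · rw [if_pos rfl]
          have hlp2 : IsLimitPt α (q.C q.top (max i₁ j₀)) :=
            hlp.mono (q.mono q.top le_rfl q.top_isLimit i₁ _ hm (le_max_left _ _) hκ2)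
          refine hlp2.mono ?_
          intro y hy
          unfold extC extX
          rw [if_pos (H.hbm.trans (le_max_right _ _)), if_neg (not_lt.mpr (le_max_right i₁ j₀))]
          exact Or.inl (Or.inl hy)
    · have hβ' : β ≤ q.top := limit_le_of_lt_add_omega hβl (lt_of_le_of_ne hβ hβtop)
      have hαne : α ≠ q.top + ω :=
        ne_of_lt (lt_of_lt_of_le hαβ (hβ'.trans (top_lt_top_add_omega q).le))
      obtain ⟨i, h1, h2, h3⟩ := q.covers α β hαβ hβ' hαl hβl
      refine ⟨i, ?_, h2, ?_⟩
      · rw [if_neg hβtop]; exact h1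
      · rw [if_neg hβtop]; exact h3

lemma extCond_pext (H : ExtHyp q b j₀) (hwl : ℵ₀ < lam) :
    PExt (extCond q b j₀ H hwl) q := by
  refine ⟨(top_lt_top_add_omega q).le, fun α hα _ => ?_, fun α hα _ i _ _ => ?_⟩
  · exact if_neg (ne_of_lt (lt_of_le_of_lt hα (top_lt_top_add_omega q)))
  · exact if_neg (ne_of_lt (lt_of_le_of_lt hα (top_lt_top_add_omega q)))

lemma extCond_iMin_top (H : ExtHyp q b j₀) (hwl : ℵ₀ < lam) :
    (extCond q b j₀ H hwl).iMin (extCond q b j₀ H hwl).top = 0 := if_pos rfl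

/-- The link property: if `b`'s whole row exists (iMin = 0), then `b` is a limit point of
every column of the new top row, with the expected trace. -/
lemma extCond_link (H : ExtHyp q b j₀) (hwl : ℵ₀ < lam) (hb0 : q.iMin b = 0)
    {i : Ordinal} (hiκ : i < kap.ord) :
    IsLimitPt b ((extCond q b j₀ H hwl).C (q.top + ω) i) ∧
      (extCond q b j₀ H hwl).C (q.top + ω) i ∩ Set.Iio b = q.C b i := by
  have hg : q.iMin b ≤ i := by rw [hb0]; exact (zero_le (a := i))
  have htr := extC_trace H hg hiκ
  have hmem : b ∈ extC q b j₀ i := by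
    unfold extC
    rw [if_pos hg]
    unfold extX
    by_cases hi : i < j₀
    · rw [if_pos hi]
      exact Or.inl (Or.inr rfl)
    · rw [if_neg hi]
      rcases H.hfresh i (not_lt.mp hi) hiκ with heq | hlp
      · rw [heq]
        exact Or.inl (Or.inr rfl)
      · exact Or.inl (Or.inl hlp.1)
  have hC : (extCond q b j₀ H hwl).C (q.top + ω) i = extC q b j₀ i := if_pos rfl
  rw [hC]
  refine ⟨⟨hmem, ?_⟩, htr⟩
  rw [htr]
  exact (q.club b H.hble H.hb i hg hiκ).sSup_eq H.hb

lemma plainHyp (q : PCond lam kap) : ExtHyp q q.top (q.iMin q.top) :=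
  ⟨q.top_isLimit, le_rfl, le_rfl, le_rfl, q.iMin_lt q.top le_rfl q.top_isLimit,
    fun _ _ _ => Or.inl rfl⟩

open scoped Classical in
/-- Player II's successor-stage move over I's condition `q`, threading through `b`
(when possible). -/
def succMove (q : PCond lam kap) (b : Ordinal) (hwl : ℵ₀ < lam) : PCond lam kap :=
  if h : ∃ j₀, ExtHyp q b j₀ then extCond q b h.choose h.choose_spec hwl
  else extCond q q.top (q.iMin q.top) (plainHyp q) hwl

lemma succMove_top (q : PCond lam kap) (b : Ordinal) (hwl : ℵ₀ < lam) :
    (succMove q b hwl).top = q.top + ω := by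
  unfold succMove
  split <;> rfl

lemma succMove_pext (q : PCond lam kap) (b : Ordinal) (hwl : ℵ₀ < lam) :
    PExt (succMove q b hwl) q := by
  unfold succMove
  split
  · exact extCond_pext _ _
  · exact extCond_pext _ _

lemma succMove_iMin_top (q : PCond lam kap) (b : Ordinal) (hwl : ℵ₀ < lam) :
    (succMove q b hwl).iMin (succMove q b hwl).top = 0 := by
  unfold succMove
  split
  · exact extCond_iMin_top _ _
  · exact extCond_iMin_top _ _

lemma succMove_link (q : PCond lam kap) {b : Ordinal} (hwl : ℵ₀ < lam)
    (hb : Order.IsSuccLimit b) (hble : b ≤ q.top) (hb0 : q.iMin b = 0)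
    {i : Ordinal} (hiκ : i < kap.ord) :
    IsLimitPt b ((succMove q b hwl).C (succMove q b hwl).top i) ∧
      (succMove q b hwl).C (succMove q b hwl).top i ∩ Set.Iio b = q.C b i := by
  have hex : ∃ j₀, ExtHyp q b j₀ := by
    rcases eq_or_lt_of_le hble with heq | hlt
    · exact ⟨q.iMin q.top, heq ▸ plainHyp q⟩
    · obtain ⟨j₀, h1, h2, h3⟩ := q.covers b q.top hlt le_rfl hb q.top_isLimit
      refine ⟨j₀, hb, hble, h1, by rw [hb0]; exact zero_le, h2, ?_⟩
      intro i' hi' hi'κ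
      exact Or.inr (h3.mono (q.mono q.top le_rfl q.top_isLimit j₀ i' h1 hi' hi'κ))
  rw [succMove, dif_pos hex]
  have := extCond_link hex.choose_spec hwl hb0 (i := i) hiκ
  exact this

end ExtCond

section LimitCond

open Ordinal

variable {lam kap : Cardinal.{0}}

lemma ordinal_two_pos : (0 : Ordinal) < 2 := by
  rw [← one_add_one_eq_two]
  exact lt_of_lt_of_le zero_lt_one (le_self_add)

lemma ordinal_two_lt_omega : (2 : Ordinal) < ω := by
  have := Ordinal.natCast_lt_omega0 2
  simpa using this

lemma add_two_lt_of_limit {ξ η : Ordinal} (hξ : Order.IsSuccLimit ξ) (h : η < ξ) : η + 2 < ξ := by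
  have h1 := hξ.succ_lt h
  have h2 := hξ.succ_lt h1
  rw [← Ordinal.add_one_eq_succ, ← Ordinal.add_one_eq_succ, add_assoc, one_add_one_eq_two] at h2
  exact h2

lemma evenOrd_two : EvenOrd 2 := by
  have := evenOrd_add_two evenOrd_zero
  simpa using this

lemma two_le_add_two (η : Ordinal) : 2 ≤ η + 2 := le_add_self

lemma inter_Iio_of_le {S T : Set Ordinal} {a b : Ordinal} (h : S ∩ Set.Iio b = T)
    (hab : a ≤ b) : S ∩ Set.Iio a = T ∩ Set.Iio a := by
  rw [← h]
  ext x
  simp only [Set.mem_inter_iff, Set.mem_Iio]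
  exact ⟨fun ⟨hs, hx⟩ => ⟨⟨hs, lt_of_lt_of_le hx hab⟩, hx⟩, fun ⟨⟨hs, _⟩, hx⟩ => ⟨hs, hx⟩⟩

/-- `η` is an even stage in `[2, ξ)`. -/
def Ev2 (ξ η : Ordinal) : Prop := EvenOrd η ∧ 2 ≤ η ∧ η < ξ

/-- The hypotheses maintained by Player II's strategy up to a limit stage `ξ`. -/
structure GoodPlay (g : Ordinal → PCond lam kap) (ξ : Ordinal) : Prop where
  lim : Order.IsSuccLimit ξ
  kpos : 0 < kap.ord
  dec : ∀ η₁ η₂, 0 < η₁ → η₁ < η₂ → η₂ < ξ → PExt (g η₂) (g η₁)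
  zero : ∀ η, Ev2 ξ η → (g η).iMin (g η).top = 0
  link : ∀ η θ, Ev2 ξ η → Ev2 ξ θ → η < θ → ∀ i, i < kap.ord →
    IsLimitPt (g η).top ((g θ).C (g θ).top i)

variable (g : Ordinal → PCond lam kap) (ξ : Ordinal)

open scoped Classical in
/-- The supremum of the tops played at even stages below the limit stage `ξ`. -/
def limTop : Ordinal :=
  Ordinal.bsup ξ (fun η _ => if Ev2 ξ η then (g η).top else 0)

/-- Column `i` of the row at the new top. -/
def limTopC (i : Ordinal) : Set Ordinal :=
  {x | ∃ η, Ev2 ξ η ∧ (x ∈ (g η).C (g η).top i ∨ x = (g η).top)}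

/-- `α` lies within the domain of some even stage below `ξ`. -/
def limD (α : Ordinal) : Prop := ∃ η, Ev2 ξ η ∧ α ≤ (g η).top

open scoped Classical in
def limiMin (α : Ordinal) : Ordinal :=
  if α = limTop g ξ then 0 else if h : limD g ξ α then (g h.choose).iMin α else 0

open scoped Classical in
def limC (α i : Ordinal) : Set Ordinal :=
  if α = limTop g ξ then limTopC g ξ i
  else if h : limD g ξ α then (g h.choose).C α i else ∅

variable {g ξ}

lemma Ev2.pos {η : Ordinal} (h : Ev2 ξ η) : 0 < η :=
  lt_of_lt_of_le ordinal_two_pos h.2.1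

namespace GoodPlay

variable (hG : GoodPlay g ξ)

include hG


lemma two_lt : 2 < ξ :=
  lt_of_lt_of_le ordinal_two_lt_omega (omega0_le_of_isSuccLimit hG.lim)

lemma ev2_two : Ev2 ξ 2 := ⟨evenOrd_two, le_rfl, hG.two_lt⟩

lemma ev2_add_two {η : Ordinal} (h : Ev2 ξ η) : Ev2 ξ (η + 2) :=
  ⟨evenOrd_add_two h.1, two_le_add_two η, add_two_lt_of_limit hG.lim h.2.2⟩

/-- Tops at even stages are strictly increasing. -/
lemma top_lt_top {η θ : Ordinal} (hη : Ev2 ξ η) (hθ : Ev2 ξ θ) (hηθ : η < θ) :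
    (g η).top < (g θ).top := by
  have hlp := hG.link η θ hη hθ hηθ 0 hG.kpos
  have hsub : (g θ).C (g θ).top 0 ⊆ Set.Iio (g θ).top :=
    ((g θ).club (g θ).top le_rfl (g θ).top_isLimit 0 ((hG.zero θ hθ).le.trans zero_le) hG.kpos).1
  exact Set.mem_Iio.mp (hsub hlp.1)

lemma top_le_limTop {η : Ordinal} (hη : Ev2 ξ η) : (g η).top ≤ limTop g ξ := by
  classical
  have h := Ordinal.le_bsup (fun η (_ : η < ξ) => if Ev2 ξ η then (g η).top else 0) η hη.2.2
  rw [if_pos hη] at h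
  exact h

lemma top_lt_limTop {η : Ordinal} (hη : Ev2 ξ η) : (g η).top < limTop g ξ :=
  lt_of_lt_of_le (hG.top_lt_top hη (hG.ev2_add_two hη) (lt_add_of_pos_right η ordinal_two_pos))
    (hG.top_le_limTop (hG.ev2_add_two hη))

lemma exists_top_gt {α : Ordinal} (hα : α < limTop g ξ) :
    ∃ η, Ev2 ξ η ∧ α < (g η).top := by
  classical
  obtain ⟨η, hηξ, hlt⟩ := (Ordinal.lt_bsup _).mp hα
  by_cases h : Ev2 ξ η
  · rw [if_pos h] at hlt
    exact ⟨η, h, hlt⟩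
  · rw [if_neg h] at hlt
    exact absurd hlt not_lt_zero

lemma limTop_isLimit : Order.IsSuccLimit (limTop g ξ) := by
  constructor
  · intro h0
    have := hG.top_lt_limTop hG.ev2_two
    exact h0.not_lt this
  · intro a ha
    obtain ⟨η, hη, hlt⟩ := hG.exists_top_gt ha.lt
    exact ha.2 hlt (hG.top_lt_limTop hη)

lemma ne_limTop {α η : Ordinal} (hη : Ev2 ξ η) (hα : α ≤ (g η).top) : α ≠ limTop g ξ :=
  ne_of_lt (lt_of_le_of_lt hα (hG.top_lt_limTop hη))

lemma limD_of_le {α η : Ordinal} (hη : Ev2 ξ η) (hα : α ≤ (g η).top) : limD g ξ α :=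
  ⟨η, hη, hα⟩

/-- (K0) The glued matrix agrees with each stage's matrix on its domain. -/
lemma agree {α η : Ordinal} (hη : Ev2 ξ η) (hα : α ≤ (g η).top) (hαl : Order.IsSuccLimit α) :
    limiMin g ξ α = (g η).iMin α ∧
      ∀ i, (g η).iMin α ≤ i → i < kap.ord → limC g ξ α i = (g η).C α i := by
  classical
  have hne := hG.ne_limTop hη hα
  have hD : limD g ξ α := hG.limD_of_le hη hα
  have hspec := hD.choose_spec
  set θ₀ := hD.choose with hθ₀def
  have hiMin : limiMin g ξ α = (g θ₀).iMin α := (if_neg hne).trans (dif_pos hD)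
  have hC : ∀ i, limC g ξ α i = (g θ₀).C α i := fun i => (if_neg hne).trans (dif_pos hD)
  have key : (g θ₀).iMin α = (g η).iMin α ∧
      ∀ i, (g η).iMin α ≤ i → i < kap.ord → (g θ₀).C α i = (g η).C α i := by
    rcases lt_trichotomy η θ₀ with hlt | heq | hlt
    · have hp := hG.dec η θ₀ hη.pos hlt hspec.1.2.2
      exact ⟨hp.2.1 α hα hαl, fun i hi hiκ => hp.2.2 α hα hαl i hi hiκ⟩
    · subst heq
      exact ⟨rfl, fun _ _ _ => rfl⟩
    · have hp := hG.dec θ₀ η hspec.1.pos hlt hη.2.2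
      have hm := hp.2.1 α hspec.2 hαl
      exact ⟨hm.symm, fun i hi hiκ =>
        (hp.2.2 α hspec.2 hαl i (by rw [← hm]; exact hi) hiκ).symm⟩
  exact ⟨by rw [hiMin, key.1], fun i hi hiκ => by rw [hC i, key.2 i hi hiκ]⟩

/-- (K1) The trace of the new top row below an even-stage top. -/
lemma topC_trace {η i : Ordinal} (hη : Ev2 ξ η) (hiκ : i < kap.ord) :
    limTopC g ξ i ∩ Set.Iio (g η).top = (g η).C (g η).top i := by
  ext x
  simp only [limTopC, Set.mem_inter_iff, Set.mem_setOf_eq, Set.mem_Iio]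
  constructor
  · rintro ⟨⟨θ, hθ, hx | hx⟩, hxη⟩
    · rcases lt_trichotomy θ η with hlt | heq | hlt
      · -- earlier stage: its top row is an initial segment of stage η's top row
        have hlp := hG.link θ η hθ hη hlt i hiκ
        have hfro : (g η).C (g θ).top i = (g θ).C (g θ).top i :=
          (hG.dec θ η hθ.pos hlt hη.2.2).2.2 (g θ).top le_rfl (g θ).top_isLimit i
            ((hG.zero θ hθ).le.trans zero_le) hiκ
        have hco := ((g η).coherent (g θ).top (g η).top (hG.top_lt_top hθ hη hlt) le_rfl
          (g θ).top_isLimit (g η).top_isLimit i ((hG.zero η hη).le.trans zero_le) hiκ hlp).2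
        rw [← hfro, ← hco] at hx
        exact hx.1
      · subst heq; exact hx
      · -- later stage: stage η's top row is an initial segment of its top row
        have hlp := hG.link η θ hη hθ hlt i hiκ
        have hco := ((g θ).coherent (g η).top (g θ).top (hG.top_lt_top hη hθ hlt) le_rfl
          (g η).top_isLimit (g θ).top_isLimit i ((hG.zero θ hθ).le.trans zero_le) hiκ hlp).2
        have hfro : (g θ).C (g η).top i = (g η).C (g η).top i :=
          (hG.dec η θ hη.pos hlt hθ.2.2).2.2 (g η).top le_rfl (g η).top_isLimit i
            ((hG.zero η hη).le.trans zero_le) hiκ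
        rw [← hfro, ← hco]
        exact ⟨hx, hxη⟩
    · subst hx
      rcases lt_trichotomy θ η with hlt | heq | hlt
      · exact (hG.link θ η hθ hη hlt i hiκ).1
      · subst heq; exact absurd hxη (lt_irrefl _)
      · exact absurd hxη (not_lt.mpr (hG.top_lt_top hη hθ hlt).le)
  · intro hx
    have hsub : (g η).C (g η).top i ⊆ Set.Iio (g η).top :=
      ((g η).club (g η).top le_rfl (g η).top_isLimit i ((hG.zero η hη).le.trans zero_le) hiκ).1
    exact ⟨⟨η, hη, Or.inl hx⟩, Set.mem_Iio.mp (hsub hx)⟩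

/-- (K2) Each even-stage top is a limit point of every column of the new top row. -/
lemma topC_isLimitPt {η i : Ordinal} (hη : Ev2 ξ η) (hiκ : i < kap.ord) :
    IsLimitPt (g η).top (limTopC g ξ i) := by
  refine ⟨⟨η, hη, Or.inr rfl⟩, ?_⟩
  rw [hG.topC_trace hη hiκ]
  exact ((g η).club (g η).top le_rfl (g η).top_isLimit i
    ((hG.zero η hη).le.trans zero_le) hiκ).sSup_eq (g η).top_isLimit

/-- (K3) Each column of the new top row is a club in the new top. -/
lemma topC_club {i : Ordinal} (hiκ : i < kap.ord) :
    IsClubIn (limTopC g ξ i) (limTop g ξ) := by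
  refine ⟨?_, ?_, ?_⟩
  · rintro x ⟨θ, hθ, hx | hx⟩
    · have hsub : (g θ).C (g θ).top i ⊆ Set.Iio (g θ).top :=
        ((g θ).club (g θ).top le_rfl (g θ).top_isLimit i ((hG.zero θ hθ).le.trans zero_le) hiκ).1
      exact Set.mem_Iio.mpr (lt_trans (Set.mem_Iio.mp (hsub hx)) (hG.top_lt_limTop hθ))
    · exact Set.mem_Iio.mpr (hx ▸ hG.top_lt_limTop hθ)
  · intro γ hγ
    obtain ⟨η, hη, hlt⟩ := hG.exists_top_gt hγ
    exact ⟨(g η).top, ⟨η, hη, Or.inr rfl⟩, hlt.le⟩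
  · intro γ hγ h0 hsup
    obtain ⟨η, hη, hlt⟩ := hG.exists_top_gt hγ
    have htr := inter_Iio_of_le (hG.topC_trace hη hiκ) hlt.le
    rw [htr] at hsup
    have := ((g η).club (g η).top le_rfl (g η).top_isLimit i
      ((hG.zero η hη).le.trans zero_le) hiκ).2.2 γ hlt h0 hsup
    exact ⟨η, hη, Or.inl this⟩

/-- (K4) Columns of the new top row are increasing. -/
lemma topC_mono {i j : Ordinal} (hij : i ≤ j) (hjκ : j < kap.ord) :
    limTopC g ξ i ⊆ limTopC g ξ j := by
  rintro x ⟨θ, hθ, hx | hx⟩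
  · exact ⟨θ, hθ, Or.inl ((g θ).mono (g θ).top le_rfl (g θ).top_isLimit i j
      ((hG.zero θ hθ).le.trans zero_le) hij hjκ hx)⟩
  · exact ⟨θ, hθ, Or.inr hx⟩

end GoodPlay


lemma limC_top (i : Ordinal) : limC g ξ (limTop g ξ) i = limTopC g ξ i := if_pos rfl

lemma limiMin_top : limiMin g ξ (limTop g ξ) = 0 := if_pos rfl

lemma limiMin_of_ne {α : Ordinal} (h : α ≠ limTop g ξ) (hD : limD g ξ α) :
    limiMin g ξ α = (g hD.choose).iMin α := (if_neg h).trans (dif_pos hD)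

lemma limC_of_ne {α : Ordinal} (h : α ≠ limTop g ξ) (hD : limD g ξ α) (i : Ordinal) :
    limC g ξ α i = (g hD.choose).C α i := (if_neg h).trans (dif_pos hD)

lemma limC_of_notD {α : Ordinal} (h : α ≠ limTop g ξ) (hD : ¬ limD g ξ α) (i : Ordinal) :
    limC g ξ α i = ∅ := (if_neg h).trans (dif_neg hD)

/-- Player II's limit-stage move: the glued condition. -/
def buildLimit (hG : GoodPlay g ξ) (hxl : ξ < lam.ord) (hlreg : lam.IsRegular) :
    PCond lam kap where
  top := limTop g ξ
  iMin := limiMin g ξ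
  C := limC g ξ
  top_lt := by
    classical
    refine Cardinal.bsup_lt_ord_of_isRegular hlreg (Cardinal.lt_ord.mp hxl) ?_
    intro η hη
    by_cases h : Ev2 ξ η
    · rw [if_pos h]; exact (g η).top_lt
    · rw [if_neg h]
      rw [Cardinal.lt_ord, Ordinal.card_zero]
      exact lt_of_lt_of_le Cardinal.aleph0_pos hlreg.1
  top_isLimit := hG.limTop_isLimit
  iMin_lt := by
    intro α hα hαl
    by_cases htop : α = limTop g ξ
    · rw [htop, limiMin_top]; exact hG.kpos
    · by_cases hD : limD g ξ α
      · rw [limiMin_of_ne htop hD]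
        exact (g hD.choose).iMin_lt α hD.choose_spec.2 hαl
      · rw [show limiMin g ξ α = 0 from (if_neg htop).trans (dif_neg hD)]
        exact hG.kpos
  club := by
    intro α hα hαl i hiM hiκ
    by_cases htop : α = limTop g ξ
    · subst htop
      rw [limC_top]
      exact hG.topC_club hiκ
    · have hD : limD g ξ α := by
        obtain ⟨η, hη, hlt⟩ := hG.exists_top_gt (lt_of_le_of_ne hα htop)
        exact ⟨η, hη, hlt.le⟩
      rw [limC_of_ne htop hD]
      rw [limiMin_of_ne htop hD] at hiM
      exact (g hD.choose).club α hD.choose_spec.2 hαl i hiM hiκ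
  mono := by
    intro α hα hαl i j hiM hij hjκ
    by_cases htop : α = limTop g ξ
    · subst htop
      rw [limC_top, limC_top]
      exact hG.topC_mono hij hjκ
    · by_cases hD : limD g ξ α
      · rw [limC_of_ne htop hD, limC_of_ne htop hD]
        rw [limiMin_of_ne htop hD] at hiM
        exact (g hD.choose).mono α hD.choose_spec.2 hαl i j hiM hij hjκ
      · rw [limC_of_notD htop hD, limC_of_notD htop hD]
  coherent := by
    intro α β hαβ hβ hαl hβl i hiM hiκ hlp
    by_cases hβtop : β = limTop g ξ
    · subst hβtop
      rw [limC_top] at hlp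
      by_cases hα : ∃ η, Ev2 ξ η ∧ α = (g η).top
      · obtain ⟨η, hη, rfl⟩ := hα
        have hag := hG.agree hη le_rfl (g η).top_isLimit
        constructor
        · rw [hag.1, hG.zero η hη]
          exact (zero_le (a := i))
        · rw [limC_top, hag.2 i (by rw [hG.zero η hη]; exact (zero_le (a := i))) hiκ]
          exact hG.topC_trace hη hiκ
      · obtain ⟨η, hη, hlt⟩ := hG.exists_top_gt hαβ
        have htr := inter_Iio_of_le (hG.topC_trace hη hiκ) hlt.le
        have hmem : α ∈ (g η).C (g η).top i := by
          have hm : α ∈ limTopC g ξ i ∩ Set.Iio (g η).top := ⟨hlp.1, Set.mem_Iio.mpr hlt⟩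
          rwa [hG.topC_trace hη hiκ] at hm
        have hlp' : IsLimitPt α ((g η).C (g η).top i) := by
          refine ⟨hmem, ?_⟩
          have h2 := hlp.2
          rwa [htr] at h2
        obtain ⟨h1, h2⟩ := (g η).coherent α (g η).top hlt le_rfl hαl (g η).top_isLimit i
          ((hG.zero η hη).le.trans zero_le) hiκ hlp'
        have hag := hG.agree hη hlt.le hαl
        refine ⟨by rw [hag.1]; exact h1, ?_⟩
        rw [limC_top, hag.2 i h1 hiκ, ← h2]
        exact htr
    · have hβlt : β < limTop g ξ := lt_of_le_of_ne hβ hβtop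
      obtain ⟨η, hη, hlt⟩ := hG.exists_top_gt hβlt
      have hagβ := hG.agree hη hlt.le hβl
      have hagα := hG.agree hη (lt_trans hαβ hlt).le hαl
      have hiM' : (g η).iMin β ≤ i := by rw [← hagβ.1]; exact hiM
      rw [hagβ.2 i hiM' hiκ] at hlp
      obtain ⟨h1, h2⟩ := (g η).coherent α β hαβ hlt.le hαl hβl i hiM' hiκ hlp
      refine ⟨by rw [hagα.1]; exact h1, ?_⟩
      rw [hagβ.2 i hiM' hiκ, hagα.2 i h1 hiκ]
      exact h2
  covers := by
    intro α β hαβ hβ hαl hβl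
    by_cases hβtop : β = limTop g ξ
    · subst hβtop
      obtain ⟨η, hη, hlt⟩ := hG.exists_top_gt hαβ
      obtain ⟨i, _, hiκ, hlp⟩ := (g η).covers α (g η).top hlt le_rfl hαl (g η).top_isLimit
      refine ⟨i, ?_, hiκ, ?_⟩
      · rw [limiMin_top]; exact (zero_le (a := i))
      · rw [limC_top]
        have htr := inter_Iio_of_le (hG.topC_trace hη hiκ) hlt.le
        refine ⟨⟨η, hη, Or.inl hlp.1⟩, ?_⟩
        rw [htr]
        exact hlp.2
    · have hβlt : β < limTop g ξ := lt_of_le_of_ne hβ hβtop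
      obtain ⟨η, hη, hlt⟩ := hG.exists_top_gt hβlt
      have hagβ := hG.agree hη hlt.le hβl
      obtain ⟨i, h1, h2, h3⟩ := (g η).covers α β hαβ hlt.le hαl hβl
      refine ⟨i, ?_, h2, ?_⟩
      · rw [hagβ.1]; exact h1
      · rw [hagβ.2 i h1 h2]
        exact h3

end LimitCond

section Parity

open Ordinal

lemma limit_add_nat_lt {α β : Ordinal} (hβ : Order.IsSuccLimit β) (h : α < β) (n : ℕ) : α + n < β := by
  induction n with
  | zero => simpa using h
  | succ m ih =>
      have : α + (m + 1 : ℕ) = Order.succ (α + m) := by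
        push_cast
        rw [← add_assoc, Ordinal.add_one_eq_succ]
      rw [this]
      exact hβ.succ_lt ih

lemma limit_nat_decomp_unique {α β : Ordinal} {n m : ℕ} (hα : α = 0 ∨ Order.IsSuccLimit α)
    (hβ : β = 0 ∨ Order.IsSuccLimit β) (h : α + n = β + m) : α = β ∧ n = m := by
  have key : ∀ (a b : Ordinal) (p q : ℕ), (a = 0 ∨ Order.IsSuccLimit a) → (b = 0 ∨ Order.IsSuccLimit b) →
      a + p = b + q → a < b → False := by
    intro a b p q _ hb h' hab
    rcases hb with rfl | hb
    · exact absurd hab not_lt_zero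
    · have h1 : a + p < b := limit_add_nat_lt hb hab p
      have h2 : b ≤ a + p := by rw [h']; exact le_self_add
      exact absurd h1 (not_lt.mpr h2)
  have hαβ : α = β := by
    rcases lt_trichotomy α β with hlt | heq | hlt
    · exact absurd (key α β n m hα hβ h hlt) not_false
    · exact heq
    · exact absurd (key β α m n hβ hα h.symm hlt) not_false
  subst hαβ
  have hnm : (n : Ordinal) = m := by
    have := h
    rwa [add_right_inj] at this
  exact ⟨rfl, by exact_mod_cast hnm⟩

lemma not_evenOrd_succ {θ : Ordinal} (h : EvenOrd θ) : ¬ EvenOrd (θ + 1) := by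
  obtain ⟨α, n, hα, rfl⟩ := h
  rintro ⟨β, m, hβ, heq⟩
  have h' : α + (2 * n + 1 : ℕ) = β + (2 * m : ℕ) := by
    push_cast
    rw [← add_assoc]
    exact heq
  obtain ⟨-, hnm⟩ := limit_nat_decomp_unique hα hβ h'
  omega

end Parity

section BuildLimitLemmas

open Ordinal

variable {lam kap : Cardinal.{0}} {g : Ordinal → PCond lam kap} {ξ : Ordinal}

lemma buildLimit_iMin_top (hG : GoodPlay g ξ) (hxl : ξ < lam.ord) (hlreg : lam.IsRegular) :
    (buildLimit hG hxl hlreg).iMin (buildLimit hG hxl hlreg).top = 0 := limiMin_top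

lemma buildLimit_link (hG : GoodPlay g ξ) (hxl : ξ < lam.ord) (hlreg : lam.IsRegular)
    {η i : Ordinal} (hη : Ev2 ξ η) (hiκ : i < kap.ord) :
    IsLimitPt (g η).top
      ((buildLimit hG hxl hlreg).C (buildLimit hG hxl hlreg).top i) := by
  have h : (buildLimit hG hxl hlreg).C (buildLimit hG hxl hlreg).top i = limTopC g ξ i :=
    limC_top i
  rw [h]
  exact hG.topC_isLimitPt hη hiκ

lemma buildLimit_pext (hG : GoodPlay g ξ) (hxl : ξ < lam.ord) (hlreg : lam.IsRegular)
    {η : Ordinal} (h0 : 0 < η) (hηξ : η < ξ) :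
    PExt (buildLimit hG hxl hlreg) (g η) := by
  obtain ⟨θ, hθ, hηθ⟩ : ∃ θ, Ev2 ξ θ ∧ η < θ := by
    rcases even_or_odd η with he | ⟨e, he, rfl⟩
    · exact ⟨η + 2, ⟨evenOrd_add_two he, two_le_add_two η,
        add_two_lt_of_limit hG.lim hηξ⟩, lt_add_of_pos_right η ordinal_two_pos⟩
    · refine ⟨(e + 1) + 1, ⟨?_, ?_, ?_⟩, lt_add_of_pos_right _ zero_lt_one⟩
      · rw [add_assoc, one_add_one_eq_two]; exact evenOrd_add_two he
      · rw [add_assoc, one_add_one_eq_two]; exact two_le_add_two e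
      · rw [Ordinal.add_one_eq_succ]; exact hG.lim.succ_lt hηξ
  have hp : PExt (g θ) (g η) := hG.dec η θ h0 hηθ hθ.2.2
  refine ⟨hp.1.trans (hG.top_le_limTop hθ), ?_, ?_⟩
  · intro α hα hαl
    have hag := hG.agree hθ (hα.trans hp.1) hαl
    have : (buildLimit hG hxl hlreg).iMin α = limiMin g ξ α := rfl
    rw [this, hag.1]
    exact hp.2.1 α hα hαl
  · intro α hα hαl i hi hiκ
    have hag := hG.agree hθ (hα.trans hp.1) hαl
    have hmin : (g θ).iMin α = (g η).iMin α := hp.2.1 α hα hαl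
    have hc : (buildLimit hG hxl hlreg).C α i = limC g ξ α i := rfl
    rw [hc, hag.2 i (by rw [hmin]; exact hi) hiκ]
    exact hp.2.2 α hα hαl i hi hiκ

end BuildLimitLemmas

section Strategy

open Ordinal

variable (lam kap : Cardinal.{0})

/-- Restriction of a play below `ξ` (with junk elsewhere), so that the strategy only
depends on the play so far. -/
def restrictPlay (hw : ω < lam.ord) (hκ : 0 < kap.ord) (f : Ordinal → PCond lam kap)
    (ξ : Ordinal) : Ordinal → PCond lam kap :=
  fun η => if η < ξ then f η else defaultCond lam kap hw hκ

lemma restrictPlay_lt {hw : ω < lam.ord} {hκ : 0 < kap.ord} {f : Ordinal → PCond lam kap}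
    {ξ η : Ordinal} (h : η < ξ) : restrictPlay lam kap hw hκ f ξ η = f η := if_pos h

open scoped Classical in
/-- The core of Player II's strategy, as a function of the restricted play. -/
def stratCore (hw : ω < lam.ord) (hκ : 0 < kap.ord) (hwl : ℵ₀ < lam) (hlreg : lam.IsRegular)
    (g : Ordinal → PCond lam kap) (ξ : Ordinal) : PCond lam kap :=
  if _ : ξ = 0 then defaultCond lam kap hw hκ
  else if _ : Order.IsSuccLimit ξ then
    (if hG : GoodPlay g ξ ∧ ξ < lam.ord then
      buildLimit hG.1 hG.2 hlreg
    else defaultCond lam kap hw hκ)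
  else
    succMove (g (Ordinal.pred ξ)) ((g (Ordinal.pred (Ordinal.pred ξ))).top) hwl

/-- Player II's strategy. -/
def strat (hw : ω < lam.ord) (hκ : 0 < kap.ord) (hwl : ℵ₀ < lam) (hlreg : lam.IsRegular)
    (f : Ordinal → PCond lam kap) (ξ : Ordinal) : PCond lam kap :=
  stratCore lam kap hw hκ hwl hlreg (restrictPlay lam kap hw hκ f ξ) ξ

lemma strat_ext (hw : ω < lam.ord) (hκ : 0 < kap.ord) (hwl : ℵ₀ < lam)
    (hlreg : lam.IsRegular) (f f' : Ordinal → PCond lam kap) (ξ : Ordinal)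
    (h : ∀ η < ξ, f η = f' η) :
    strat lam kap hw hκ hwl hlreg f ξ = strat lam kap hw hκ hwl hlreg f' ξ := by
  have hr : restrictPlay lam kap hw hκ f ξ = restrictPlay lam kap hw hκ f' ξ := by
    funext η
    unfold restrictPlay
    by_cases hη : η < ξ
    · rw [if_pos hη, if_pos hη, h η hη]
    · rw [if_neg hη, if_neg hη]
  unfold strat
  rw [hr]

lemma add_two_eq_succ_succ (θ : Ordinal) : θ + 2 = Order.succ (Order.succ θ) := by
  rw [← Ordinal.add_one_eq_succ, ← Ordinal.add_one_eq_succ, add_assoc, one_add_one_eq_two]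

lemma strat_succ (hw : ω < lam.ord) (hκ : 0 < kap.ord) (hwl : ℵ₀ < lam)
    (hlreg : lam.IsRegular) (f : Ordinal → PCond lam kap) {θ : Ordinal} :
    strat lam kap hw hκ hwl hlreg f (θ + 2)
      = succMove (f (θ + 1)) ((f θ).top) hwl := by
  have hsucc := add_two_eq_succ_succ θ
  have hne : θ + 2 ≠ 0 := by
    rw [hsucc]
    exact (Order.succ_ne_bot _)
  have hnl : ¬ Order.IsSuccLimit (θ + 2) := by
    rw [hsucc]
    exact Order.not_isSuccLimit_succ _
  have hp1 : Ordinal.pred (θ + 2) = θ + 1 := by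
    rw [hsucc, Ordinal.pred_succ, Ordinal.add_one_eq_succ]
  have hp2 : Ordinal.pred (θ + 1) = θ := by
    rw [Ordinal.add_one_eq_succ, Ordinal.pred_succ]
  have h1lt : θ + 1 < θ + 2 := by
    rw [hsucc, ← Ordinal.add_one_eq_succ]
    exact Order.lt_succ _
  have h0lt : θ < θ + 2 := lt_add_of_pos_right θ ordinal_two_pos
  unfold strat stratCore
  rw [dif_neg hne, dif_neg hnl, hp1, hp2, restrictPlay_lt lam kap h1lt,
    restrictPlay_lt lam kap h0lt]

lemma strat_limit (hw : ω < lam.ord) (hκ : 0 < kap.ord) (hwl : ℵ₀ < lam)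
    (hlreg : lam.IsRegular) (f : Ordinal → PCond lam kap) {ξ : Ordinal}
    (hlim : Order.IsSuccLimit ξ) (hG : GoodPlay (restrictPlay lam kap hw hκ f ξ) ξ)
    (hxl : ξ < lam.ord) :
    strat lam kap hw hκ hwl hlreg f ξ = buildLimit hG hxl hlreg := by
  unfold strat stratCore
  rw [dif_neg hlim.pos.ne', dif_pos hlim, dif_pos (⟨hG, hxl⟩ :
    GoodPlay (restrictPlay lam kap hw hκ f ξ) ξ ∧ ξ < lam.ord)]

end Strategy

section Main

open Ordinal

lemma lt_add_two_iff {η θ : Ordinal} : η < θ + 2 ↔ η ≤ θ + 1 := by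
  rw [add_two_eq_succ_succ, Order.lt_succ_iff, Ordinal.add_one_eq_succ]

theorem statement9' (lam kap : Cardinal.{0}) (hk : kap.IsRegular)
    (hl : lam.IsRegular) (hkl : kap < lam) :
    StratClosed (PCond lam kap) PExt lam.ord := by
  have hwl : ℵ₀ < lam := lt_of_le_of_lt hk.1 hkl
  have hw : ω < lam.ord := by
    rw [← Cardinal.ord_aleph0]
    exact Cardinal.ord_lt_ord.mpr hwl
  have hκ : 0 < kap.ord := by
    have h := Cardinal.ord_lt_ord.mpr (lt_of_lt_of_le Cardinal.aleph0_pos hk.1)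
    rwa [Cardinal.ord_zero] at h
  refine ⟨strat lam kap hw hκ hwl hl,
    fun f f' ξ h => strat_ext lam kap hw hκ hwl hl f f' ξ h, ?_⟩
  intro f ξ hξ0 hxl hEv hdec hfol
  -- The main induction: every even stage in `[2, ξ)` has the constructed shape.
  have key : ∀ θ, EvenOrd θ → 2 ≤ θ → θ < ξ →
      (f θ).iMin (f θ).top = 0 ∧
        ∀ η, EvenOrd η → 2 ≤ η → η < θ → ∀ i, i < kap.ord →
          IsLimitPt (f η).top ((f θ).C (f θ).top i) := by
    intro θ
    induction θ using Ordinal.induction with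
    | h θ IH =>
      intro hev h2 hθξ
      have hθ0 : 0 < θ := lt_of_lt_of_le ordinal_two_pos h2
      have hfθ : f θ = strat lam kap hw hκ hwl hl f θ := hfol θ hθ0 hθξ hev
      by_cases hlim : Order.IsSuccLimit θ
      · -- limit stage
        have hGP : GoodPlay (restrictPlay lam kap hw hκ f θ) θ := by
          refine ⟨hlim, hκ, ?_, ?_, ?_⟩
          · intro η₁ η₂ h1 h12 h2θ
            rw [restrictPlay_lt lam kap (lt_trans h12 h2θ), restrictPlay_lt lam kap h2θ]
            exact hdec η₁ η₂ h1 h12 (h2θ.trans hθξ)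
          · intro η hη
            rw [restrictPlay_lt lam kap hη.2.2]
            exact (IH η hη.2.2 hη.1 hη.2.1 (hη.2.2.trans hθξ)).1
          · intro η θ' hη hθ' hηθ' i hiκ
            rw [restrictPlay_lt lam kap hη.2.2, restrictPlay_lt lam kap hθ'.2.2]
            exact (IH θ' hθ'.2.2 hθ'.1 hθ'.2.1 (hθ'.2.2.trans hθξ)).2 η hη.1 hη.2.1 hηθ' i hiκ
        have hfθ' : f θ = buildLimit hGP (hθξ.trans hxl) hl := by
          rw [hfθ]
          exact strat_limit lam kap hw hκ hwl hl f hlim hGP (hθξ.trans hxl)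
        constructor
        · rw [hfθ']
          exact buildLimit_iMin_top hGP _ hl
        · intro η hηe hη2 hηθ i hiκ
          have hη' : Ev2 θ η := ⟨hηe, hη2, hηθ⟩
          have hbl := buildLimit_link hGP (hθξ.trans hxl) hl hη' hiκ
          rw [restrictPlay_lt lam kap hηθ] at hbl
          rw [hfθ']
          exact hbl
      · -- successor stage
        obtain ⟨θ', hθ'ev, rfl⟩ := even_succ_form hev (ne_of_gt hθ0) hlim
        have hfθ' : f (θ' + 2) = succMove (f (θ' + 1)) ((f θ').top) hwl := by
          rw [hfθ]
          exact strat_succ lam kap hw hκ hwl hl f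
        have h1lt : θ' + 1 < θ' + 2 := lt_add_two_iff.mpr le_rfl
        have h0lt : θ' < θ' + 2 := lt_add_of_pos_right θ' ordinal_two_pos
        refine ⟨by rw [hfθ']; exact succMove_iMin_top _ _ _, ?_⟩
        intro η hηe hη2 hηθ i hiκ
        have hηle : η ≤ θ' := by
          have hne : η ≠ θ' + 1 := fun heq => not_evenOrd_succ hθ'ev (heq ▸ hηe)
          rcases lt_or_eq_of_le (lt_add_two_iff.mp hηθ) with hlt | heq
          · rwa [Ordinal.add_one_eq_succ, Order.lt_succ_iff] at hlt
          · exact absurd heq hne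
        have hθ'2 : 2 ≤ θ' := le_trans hη2 hηle
        have IHθ' := IH θ' h0lt hθ'ev hθ'2 (lt_trans h0lt hθξ)
        have hqp : PExt (f (θ' + 1)) (f θ') :=
          hdec θ' (θ' + 1) (lt_of_lt_of_le ordinal_two_pos hθ'2)
            (lt_add_of_pos_right θ' zero_lt_one) (lt_trans h1lt hθξ)
        have hble : (f θ').top ≤ (f (θ' + 1)).top := hqp.1
        have hb0 : (f (θ' + 1)).iMin (f θ').top = 0 := by
          rw [hqp.2.1 (f θ').top le_rfl (f θ').top_isLimit]
          exact IHθ'.1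
        have hlink := succMove_link (f (θ' + 1)) hwl (f θ').top_isLimit hble hb0 hiκ
        rcases eq_or_lt_of_le hηle with heq | hηlt
        · subst heq
          rw [hfθ']
          exact hlink.1
        · have hlinkIH := IHθ'.2 η hηe hη2 hηlt i hiκ
          have hfro : (f (θ' + 1)).C (f θ').top i = (f θ').C (f θ').top i :=
            hqp.2.2 (f θ').top le_rfl (f θ').top_isLimit i
              (IHθ'.1.le.trans ((zero_le (a := i)))) hiκ
          have htr := hlink.2
          rw [hfro] at htr
          have hη_lt_b : (f η).top < (f θ').top := by
            have hsub : (f θ').C (f θ').top i ⊆ Set.Iio (f θ').top :=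
              ((f θ').club (f θ').top le_rfl (f θ').top_isLimit i
                (IHθ'.1.le.trans ((zero_le (a := i)))) hiκ).1
            exact Set.mem_Iio.mp (hsub hlinkIH.1)
          rw [hfθ']
          constructor
          · have hmem : (f η).top ∈ (succMove (f (θ' + 1)) ((f θ').top) hwl).C
                (succMove (f (θ' + 1)) ((f θ').top) hwl).top i ∩ Set.Iio (f θ').top := by
              rw [htr]
              exact hlinkIH.1
            exact hmem.1
          · have hint := inter_Iio_of_le htr hη_lt_b.le
            rw [hint]
            exact hlinkIH.2
  -- The actual move at stage `ξ`.
  intro η hη0 hηξ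
  by_cases hlim : Order.IsSuccLimit ξ
  · have hGP : GoodPlay (restrictPlay lam kap hw hκ f ξ) ξ := by
      refine ⟨hlim, hκ, ?_, ?_, ?_⟩
      · intro η₁ η₂ h1 h12 h2θ
        rw [restrictPlay_lt lam kap (lt_trans h12 h2θ), restrictPlay_lt lam kap h2θ]
        exact hdec η₁ η₂ h1 h12 h2θ
      · intro η' hη'
        rw [restrictPlay_lt lam kap hη'.2.2]
        exact (key η' hη'.1 hη'.2.1 hη'.2.2).1
      · intro η' θ' hη' hθ' hηθ' i hiκ
        rw [restrictPlay_lt lam kap hη'.2.2, restrictPlay_lt lam kap hθ'.2.2]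
        exact (key θ' hθ'.1 hθ'.2.1 hθ'.2.2).2 η' hη'.1 hη'.2.1 hηθ' i hiκ
    rw [strat_limit lam kap hw hκ hwl hl f hlim hGP hxl]
    have hbp := buildLimit_pext hGP hxl hl hη0 hηξ
    rwa [restrictPlay_lt lam kap hηξ] at hbp
  · obtain ⟨θ', hθ'ev, rfl⟩ := even_succ_form hEv (ne_of_gt hξ0) hlim
    rw [strat_succ lam kap hw hκ hwl hl f]
    have hpext : PExt (succMove (f (θ' + 1)) ((f θ').top) hwl) (f (θ' + 1)) :=
      succMove_pext _ _ _
    have h1lt : θ' + 1 < θ' + 2 := lt_add_two_iff.mpr le_rfl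
    rcases eq_or_lt_of_le (lt_add_two_iff.mp hηξ) with heq | hlt
    · subst heq
      exact hpext
    · exact pext_trans hpext (hdec η (θ' + 1) hη0 hlt h1lt)

end Main

/-- Proposition 6.8: for infinite regular cardinals `kap < lam`, the poset
`ℙ(lam, kap)` is `lam`-strategically closed: Player II has a winning strategy
in the game `G_lam(ℙ(lam, kap))`. -/
theorem statement9 (lam kap : Cardinal.{0}) (hk : kap.IsRegular)
    (hl : lam.IsRegular) (hkl : kap < lam) :
    StratClosed (PCond lam kap) PExt lam.ord := by
  exact statement9' lam kap hk hl hkl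

end Paper
end
end

section
/- Let κ < λ be infinite regular cardinals. For every α < λ, the set D_α = {p ∈ ℙ(λ,κ) : α ≤ γ^p} is dense in ℙ(λ,κ), i.e., every condition has an extension whose top level is at least α. -/
noncomputable section

open Cardinal Set

namespace Paper

/-- Auxiliary: the sup of a set of ordinals contained in `Iio t` is `≤ t`. -/
lemma sSup_le_of_subset_Iio_s10 {S : Set Ordinal} {t : Ordinal} (hS : S ⊆ Set.Iio t) :
    sSup S ≤ t := by
  rcases S.eq_empty_or_nonempty with rfl | hne
  · simp [sSup_empty]
  · exact csSup_le hne (fun b hb => (hS hb).le)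

lemma bddAbove_of_subset_Iio_s10 {S : Set Ordinal} {t : Ordinal} (hS : S ⊆ Set.Iio t) :
    BddAbove S := ⟨t, fun x hx => (hS hx).le⟩

/-- Auxiliary: a limit ordinal `b` is `≤ c` if every ordinal below `b` is below `c`. -/
lemma limit_le_of_forall_lt {b c : Ordinal} (h : ∀ a < b, a < c) : b ≤ c := by
  by_contra hc
  push_neg at hc
  exact absurd (h c hc) (lt_irrefl c)

/-- Auxiliary: an unbounded subset of a limit ordinal has sup equal to it. -/
lemma sSup_eq_of_unbounded {S : Set Ordinal} {t : Ordinal} (ht : Order.IsSuccLimit t)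
    (hS : S ⊆ Set.Iio t) (hub : ∀ γ < t, ∃ β ∈ S, γ ≤ β) : sSup S = t := by
  refine le_antisymm (sSup_le_of_subset_Iio_s10 hS) (limit_le_of_forall_lt fun a ha => ?_)
  obtain ⟨β, hβS, hβ⟩ := hub _ (ht.succ_lt ha)
  exact lt_of_lt_of_le (lt_of_lt_of_le (Order.lt_succ a) hβ)
    (le_csSup (bddAbove_of_subset_Iio_s10 hS) hβS)

/-- Auxiliary intersection identity: part of the new club below an old level. -/
lemma union_Ico_inter_Iio_of_le {S : Set Ordinal} {t β γ : Ordinal} (hγ : γ ≤ t) :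
    (S ∪ Set.Ico t β) ∩ Set.Iio γ = S ∩ Set.Iio γ := by
  ext x
  simp only [Set.mem_inter_iff, Set.mem_union, Set.mem_Ico, Set.mem_Iio]
  constructor
  · rintro ⟨hx | ⟨h1, _⟩, hxγ⟩
    · exact ⟨hx, hxγ⟩
    · exact absurd (lt_of_lt_of_le hxγ hγ) (not_lt.2 h1)
  · rintro ⟨hx, hxγ⟩
    exact ⟨Or.inl hx, hxγ⟩

/-- Auxiliary intersection identity: part of the new club below a new level. -/
lemma union_Ico_inter_Iio_of_gt {S : Set Ordinal} {t β γ : Ordinal}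
    (hS : S ⊆ Set.Iio t) (htγ : t < γ) (hγβ : γ ≤ β) :
    (S ∪ Set.Ico t β) ∩ Set.Iio γ = S ∪ Set.Ico t γ := by
  ext x
  simp only [Set.mem_inter_iff, Set.mem_union, Set.mem_Ico, Set.mem_Iio]
  constructor
  · rintro ⟨hx | ⟨h1, _⟩, hxγ⟩
    · exact Or.inl hx
    · exact Or.inr ⟨h1, hxγ⟩
  · rintro (hx | ⟨h1, h2⟩)
    · exact ⟨Or.inl hx, lt_trans (hS hx) htγ⟩
    · exact ⟨Or.inr ⟨h1, lt_of_lt_of_le h2 hγβ⟩, h2⟩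

/-- Proposition 6.10: for infinite regular cardinals `kap < lam` and
`α < lam`, the set `D_α = {p ∈ ℙ(lam, kap) : α ≤ γ^p}` is dense in
`ℙ(lam, kap)`. -/
theorem statement10 (lam kap : Cardinal.{0}) (hk : kap.IsRegular)
    (hl : lam.IsRegular) (hkl : kap < lam) (α : Ordinal) (hα : α < lam.ord)
    (p : PCond lam kap) :
    ∃ q : PCond lam kap, PExt q p ∧ α ≤ q.top := by
  classical
  set t := p.top with ht_def
  set ν : Ordinal := max α t + Ordinal.omega0 with hν_def
  have htlim : Order.IsSuccLimit t := p.top_isLimit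
  have hmax_lt_ν : max α t < ν := by
    simpa [hν_def] using (lt_add_iff_pos_right (max α t)).2 Ordinal.omega0_pos
  have ht_lt_ν : t < ν := lt_of_le_of_lt (le_max_right _ _) hmax_lt_ν
  have hα_le_ν : α ≤ ν := le_of_lt (lt_of_le_of_lt (le_max_left _ _) hmax_lt_ν)
  have hν_lt : ν < lam.ord := by
    rw [Cardinal.lt_ord, hν_def, Ordinal.card_add, Ordinal.card_omega0]
    exact Cardinal.add_lt_of_lt hl.aleph0_le
      (Cardinal.lt_ord.1 (max_lt hα p.top_lt)) (lt_of_le_of_lt hk.aleph0_le hkl)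
  have hνlim : Order.IsSuccLimit ν := Ordinal.isSuccLimit_add _ Ordinal.isSuccLimit_omega0
  -- key facts about p's clubs at the top level
  have hiMin_t : p.iMin t < kap.ord := p.iMin_lt t le_rfl htlim
  have hStop : ∀ i, p.iMin t ≤ i → i < kap.ord → IsClubIn (p.C t i) t :=
    fun i h1 h2 => p.club t le_rfl htlim i h1 h2
  -- the key lemma: the new sets are clubs, limit points classified
  -- define the candidate
  refine ⟨⟨ν,
    fun δ => if δ ≤ t then p.iMin δ else p.iMin t,
    fun δ i => if δ ≤ t then p.C δ i else p.C t i ∪ Set.Ico t δ,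
    hν_lt, hνlim, ?_, ?_, ?_, ?_, ?_⟩, ⟨le_of_lt ht_lt_ν, ?_, ?_⟩, hα_le_ν⟩
  · -- iMin_lt
    intro δ hδ hδlim
    by_cases h : δ ≤ t
    · simpa [h] using p.iMin_lt δ h hδlim
    · simpa [h] using hiMin_t
  · -- club
    intro δ hδ hδlim i h1 h2
    by_cases h : δ ≤ t
    · simp only [h, if_pos] at h1 ⊢
      exact p.club δ h hδlim i h1 h2
    · push_neg at h
      simp only [h.not_ge, if_neg, not_false_iff] at h1 ⊢
      obtain ⟨hsub, hub, hcl⟩ := hStop i h1 h2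
      refine ⟨?_, ?_, ?_⟩
      · rintro x (hx | hx)
        · exact lt_trans (hsub hx) h
        · exact hx.2
      · intro γ hγ
        exact ⟨max γ t, Or.inr ⟨le_max_right _ _, max_lt hγ h⟩, le_max_left _ _⟩
      · intro γ hγ hγpos hsup
        by_cases hγt : γ ≤ t
        · rcases eq_or_lt_of_le hγt with rfl | hγt'
          · exact Or.inr ⟨le_rfl, hγ⟩
          · rw [union_Ico_inter_Iio_of_le hγt] at hsup
            exact Or.inl (hcl γ hγt' hγpos hsup)
        · push_neg at hγt
          exact Or.inr ⟨hγt.le, hγ⟩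
  · -- mono
    intro δ hδ hδlim i j h1 h2 h3
    by_cases h : δ ≤ t
    · simp only [h, if_pos] at h1 ⊢
      exact p.mono δ h hδlim i j h1 h2 h3
    · simp only [h, if_neg, not_false_iff] at h1 ⊢
      exact Set.union_subset_union_left _ (p.mono t le_rfl htlim i j h1 h2 h3)
  · -- coherent
    intro β' γ' hlt hγ'ν hβ'lim hγ'lim i h1 h2 hpt
    by_cases hγt : γ' ≤ t
    · have hβt : β' ≤ t := le_of_lt (lt_of_lt_of_le hlt hγt)
      simp only [hγt, hβt, if_pos] at h1 hpt ⊢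
      exact p.coherent β' γ' hlt hγt hβ'lim hγ'lim i h1 h2 hpt
    · push_neg at hγt
      simp only [hγt.not_ge, if_neg, not_false_iff] at h1 hpt ⊢
      have hSsub : p.C t i ⊆ Set.Iio t := (hStop i h1 h2).1
      by_cases hβt : β' ≤ t
      · rcases eq_or_lt_of_le hβt with rfl | hβt'
        · -- β' = t
          simp only [le_rfl, if_pos]
          exact ⟨h1, by
            rw [union_Ico_inter_Iio_of_le le_rfl]
            exact Set.inter_eq_left.2 hSsub⟩
        · -- β' < t : use coherence of p at level t
          have hptS : IsLimitPt β' (p.C t i) := by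
            obtain ⟨hmem, hsup⟩ := hpt
            rw [union_Ico_inter_Iio_of_le hβt] at hsup
            rcases hmem with hm | hm
            · exact ⟨hm, hsup⟩
            · exact absurd (lt_of_lt_of_le hβt' hm.1) (lt_irrefl _)
          obtain ⟨hi, hC⟩ := p.coherent β' t hβt' le_rfl hβ'lim htlim i h1 h2 hptS
          simp only [hβt, if_pos]
          exact ⟨hi, by rw [union_Ico_inter_Iio_of_le hβt, hC]⟩
      · push_neg at hβt
        simp only [hβt.not_ge, if_neg, not_false_iff]
        exact ⟨h1, union_Ico_inter_Iio_of_gt hSsub hβt hlt.le⟩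
  · -- covers
    intro β' γ' hlt hγ'ν hβ'lim hγ'lim
    by_cases hγt : γ' ≤ t
    · have hβt : β' ≤ t := le_of_lt (lt_of_lt_of_le hlt hγt)
      obtain ⟨i, h1, h2, h3⟩ := p.covers β' γ' hlt hγt hβ'lim hγ'lim
      exact ⟨i, by simpa [hγt, hβt] using ⟨h1, h2, h3⟩⟩
    · push_neg at hγt
      by_cases hβt : β' ≤ t
      · rcases eq_or_lt_of_le hβt with rfl | hβt'
        · -- β' = t : t is a limit point of every new club
          refine ⟨p.iMin t, ?_⟩
          simp only [hγt.not_ge, if_neg, not_false_iff, le_rfl, true_and]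
          obtain ⟨hsub, hub, _⟩ := hStop (p.iMin t) le_rfl hiMin_t
          refine ⟨hiMin_t, Or.inr ⟨le_rfl, hγt⟩, ?_⟩
          rw [union_Ico_inter_Iio_of_le le_rfl, Set.inter_eq_left.2 hsub]
          exact sSup_eq_of_unbounded htlim hsub hub
        · -- β' < t : use covering of p at level t
          obtain ⟨i, h1, h2, hm, hsup⟩ := p.covers β' t hβt' le_rfl hβ'lim htlim
          refine ⟨i, ?_⟩
          simp only [hγt.not_ge, if_neg, not_false_iff]
          refine ⟨h1, h2, Or.inl hm, ?_⟩
          rw [union_Ico_inter_Iio_of_le hβt]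
          exact hsup
      · -- t < β' < γ' : β' is a limit point of the interval part
        push_neg at hβt
        refine ⟨p.iMin t, ?_⟩
        simp only [hγt.not_ge, if_neg, not_false_iff]
        refine ⟨le_rfl, hiMin_t, Or.inr ⟨hβt.le, hlt⟩, ?_⟩
        have hSsub : p.C t (p.iMin t) ⊆ Set.Iio t := (hStop (p.iMin t) le_rfl hiMin_t).1
        rw [union_Ico_inter_Iio_of_gt hSsub hβt hlt.le]
        refine sSup_eq_of_unbounded hβ'lim ?_ ?_
        · rintro x (hx | hx)
          · exact lt_trans (hSsub hx) hβt
          · exact hx.2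
        · intro γ hγ
          exact ⟨max γ t, Or.inr ⟨le_max_right _ _, max_lt hγ hβt⟩, le_max_left _ _⟩
  · -- PExt : iMin agreement
    intro δ hδ _
    simp [show δ ≤ t from hδ]
  · -- PExt : C agreement
    intro δ hδ _ i _ _
    simp [show δ ≤ t from hδ]

end Paper
end
end

section
/- Let κ be an infinite cardinal. Then there is a κ⁺-system of width κ with no cofinal branch. -/
noncomputable section

open Cardinal Set

namespace Paper

/-- A `lam`-system: an unbounded set `I ⊆ lam`, levels `{α} × κ_α` for `α ∈ I`
with `0 < κ_α < lam`, and a nonempty set `Rels` of fewer than `lam` many binary,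
transitive, tree-like relations on the underlying set
`⋃_{α ∈ I} {α} × κ_α ⊆ Ordinal × Ordinal`, each increasing in the first
coordinate, such that any two levels are connected by some relation. -/
structure System (lam : Cardinal.{0}) where
  I : Set Ordinal
  kappa : Ordinal → Cardinal.{0}
  Rels : Set ((Ordinal × Ordinal) → (Ordinal × Ordinal) → Prop)
  I_lt : ∀ α ∈ I, α < lam.ord
  I_unbounded : ∀ γ < lam.ord, ∃ α ∈ I, γ < α
  kappa_pos : ∀ α ∈ I, 0 < kappa α
  kappa_lt : ∀ α ∈ I, kappa α < lam
  Rels_nonempty : Rels.Nonempty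
  Rels_lt : #Rels < Cardinal.lift.{1} lam
  rel_mem : ∀ R ∈ Rels, ∀ u v : Ordinal × Ordinal, R u v →
    (u.1 ∈ I ∧ u.2 < (kappa u.1).ord) ∧ (v.1 ∈ I ∧ v.2 < (kappa v.1).ord)
  rel_trans : ∀ R ∈ Rels, ∀ u v w, R u v → R v w → R u w
  rel_treeLike : ∀ R ∈ Rels, ∀ u v w, R u w → R v w → u = v ∨ R u v ∨ R v u
  rel_increasing : ∀ R ∈ Rels, ∀ u v : Ordinal × Ordinal, R u v → u.1 < v.1
  connected : ∀ α₀ ∈ I, ∀ α₁ ∈ I, α₀ < α₁ →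
    ∃ β₀ < (kappa α₀).ord, ∃ β₁ < (kappa α₁).ord, ∃ R ∈ Rels, R (α₀, β₀) (α₁, β₁)

/-- The width of a system: `max(sup{κ_α : α ∈ I}, |Rels|)`. -/
def System.width {lam : Cardinal.{0}} (S : System lam) : Cardinal.{1} :=
  max (⨆ α : S.I, Cardinal.lift.{1} (S.kappa α.1)) #S.Rels

/-- A system is narrow if `width(S)⁺ < lam`. -/
def System.IsNarrow {lam : Cardinal.{0}} (S : System lam) : Prop :=
  Order.succ S.width < Cardinal.lift.{1} lam

/-- `b` is a branch of `S` through the relation `R`: a set of pairwise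
`R`-comparable elements of `S`. -/
def System.IsBranch {lam : Cardinal.{0}} (S : System lam)
    (R : (Ordinal × Ordinal) → (Ordinal × Ordinal) → Prop)
    (b : Set (Ordinal × Ordinal)) : Prop :=
  R ∈ S.Rels ∧ (∀ u ∈ b, u.1 ∈ S.I ∧ u.2 < (S.kappa u.1).ord) ∧
    ∀ u ∈ b, ∀ v ∈ b, u = v ∨ R u v ∨ R v u

/-- A cofinal branch: a branch meeting levels `S_α` for unboundedly many `α ∈ I`. -/
def System.IsCofinalBranch {lam : Cardinal.{0}} (S : System lam)
    (R : (Ordinal × Ordinal) → (Ordinal × Ordinal) → Prop)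
    (b : Set (Ordinal × Ordinal)) : Prop :=
  S.IsBranch R b ∧ ∀ γ < lam.ord, ∃ u ∈ b, γ < u.1

/-- `S` has a cofinal branch (through some of its relations). -/
def System.HasCofinalBranch {lam : Cardinal.{0}} (S : System lam) : Prop :=
  ∃ R b, S.IsCofinalBranch R b

/-- Proposition 8.3: for every infinite cardinal `kap` there is a
`kap⁺`-system of width `kap` with no cofinal branch. -/
theorem statement11 (kap : Cardinal.{0}) (hk : ℵ₀ ≤ kap) :
    ∃ S : System (Order.succ kap), S.width = Cardinal.lift.{1} kap ∧
      ¬ S.HasCofinalBranch := by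
  classical
  have hk1 : ℵ₀ ≤ Order.succ kap := hk.trans (Order.le_succ kap)
  have hlim : Order.IsSuccLimit ((Order.succ kap).ord) := Cardinal.isSuccLimit_ord hk1
  have hordpos : (0 : Ordinal) < (Order.succ kap).ord := hlim.pos
  have hk0 : (0 : Ordinal) < kap.ord := by
    rw [Cardinal.lt_ord, Ordinal.card_zero]
    exact (aleph0_pos).trans_le hk
  have hk1' : (1 : Ordinal) < kap.ord := by
    rw [Cardinal.lt_ord, Ordinal.card_one]
    exact Cardinal.one_lt_aleph0.trans_le hk
  -- injections from initial segments into `kap.ord`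
  have key : ∀ α : Ordinal, ∃ f : Ordinal → Ordinal,
      α < (Order.succ kap).ord →
        (∀ β < α, f β < kap.ord) ∧
        (∀ β₀ < α, ∀ β₁ < α, f β₀ = f β₁ → β₀ = β₁) := by
    intro α
    by_cases hα : α < (Order.succ kap).ord
    · have hcard : α.card ≤ kap := by
        have := (Cardinal.lt_ord).1 hα
        exact Order.lt_succ_iff.1 this
      have hmk : #(Set.Iio α) ≤ #(Set.Iio kap.ord) := by
        rw [Ordinal.mk_Iio_ordinal, Ordinal.mk_Iio_ordinal, Cardinal.card_ord]
        exact Cardinal.lift_le.2 hcard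
      obtain ⟨g⟩ := Cardinal.le_def _ _ |>.1 hmk
      refine ⟨fun β => if h : β < α then (g ⟨β, h⟩ : Ordinal) else 0, fun _ => ⟨?_, ?_⟩⟩
      · intro β hβ
        simp only [dif_pos hβ]
        exact (g ⟨β, hβ⟩).2
      · intro β₀ h₀ β₁ h₁ h
        simp only [dif_pos h₀, dif_pos h₁] at h
        have := g.injective (Subtype.ext h)
        exact congrArg Subtype.val this
    · exact ⟨fun _ => 0, fun h => absurd h hα⟩
  choose e he using key
  set Rel : Ordinal → (Ordinal × Ordinal) → (Ordinal × Ordinal) → Prop :=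
    fun ξ u v => u.1 < v.1 ∧ v.1 < (Order.succ kap).ord ∧ u.2 = 0 ∧ v.2 = 1 ∧
      e v.1 u.1 = ξ with hRel
  refine ⟨{
    I := Set.Iio (Order.succ kap).ord
    kappa := fun _ => kap
    Rels := Rel '' Set.Iio kap.ord
    I_lt := fun α hα => hα
    I_unbounded := fun γ hγ => ⟨γ + 1, hlim.succ_lt hγ, lt_add_one γ⟩
    kappa_pos := fun _ _ => aleph0_pos.trans_le hk
    kappa_lt := fun _ _ => Order.lt_succ kap
    Rels_nonempty := ⟨Rel 0, Set.mem_image_of_mem _ hk0⟩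
    Rels_lt := lt_of_le_of_lt (le_trans (Cardinal.mk_image_le) (le_of_eq (by
      rw [Ordinal.mk_Iio_ordinal, Cardinal.card_ord])))
      (Cardinal.lift_lt.2 (Order.lt_succ kap))
    rel_mem := ?_
    rel_trans := ?_
    rel_treeLike := ?_
    rel_increasing := ?_
    connected := ?_ }, ?_, ?_⟩
  · rintro R ⟨ξ, -, rfl⟩ u v ⟨h1, h2, h3, h4, -⟩
    exact ⟨⟨h1.trans h2, h3 ▸ hk0⟩, ⟨h2, h4 ▸ hk1'⟩⟩
  · rintro R ⟨ξ, -, rfl⟩ u v w ⟨-, -, -, h4, -⟩ ⟨-, -, h3', -, -⟩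
    exact absurd (h3' ▸ h4) zero_ne_one
  · rintro R ⟨ξ, -, rfl⟩ u v w ⟨h1, h2, h3, -, h5⟩ ⟨h1', -, h3', -, h5'⟩
    left
    have := (he w.1 h2).2 u.1 h1 v.1 h1' (h5.trans h5'.symm)
    exact Prod.ext this (h3.trans h3'.symm)
  · rintro R ⟨ξ, -, rfl⟩ u v ⟨h1, -⟩
    exact h1
  · intro α₀ hα₀ α₁ hα₁ h
    refine ⟨0, hk0, 1, hk1', Rel (e α₁ α₀), Set.mem_image_of_mem _ ((he α₁ hα₁).1 α₀ h),
      h, hα₁, rfl, rfl, rfl⟩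
  · -- width
    show max (⨆ _ : Set.Iio (Order.succ kap).ord, Cardinal.lift.{1} kap) _ = _
    have : Nonempty (Set.Iio (Order.succ kap).ord) := ⟨⟨0, hordpos⟩⟩
    rw [ciSup_const]
    refine max_eq_left (le_trans Cardinal.mk_image_le (le_of_eq ?_))
    rw [Ordinal.mk_Iio_ordinal, Cardinal.card_ord]
  · -- no cofinal branch
    rintro ⟨R, b, ⟨⟨hR, hmem, hcomp⟩, hcof⟩⟩
    obtain ⟨ξ, -, rfl⟩ := hR
    obtain ⟨u, hu, hu0⟩ := hcof 0 hordpos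
    obtain ⟨v, hv, huv⟩ := hcof u.1 (hmem u hu).1
    have huv' : u ≠ v := fun h => absurd (h ▸ huv) (lt_irrefl _)
    have hv1 : v.2 = 1 := by
      rcases hcomp u hu v hv with h | h | h
      · exact absurd h huv'
      · exact h.2.2.2.1
      · exact absurd (h.1.trans huv) (lt_irrefl _)
    obtain ⟨w, hw, hvw⟩ := hcof v.1 (hmem v hv).1
    have hvw' : v ≠ w := fun h => absurd (h ▸ hvw) (lt_irrefl _)
    rcases hcomp v hv w hw with h | h | h
    · exact absurd h hvw'
    · exact absurd (hv1 ▸ h.2.2.1) one_ne_zero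
    · exact absurd (h.1.trans hvw) (lt_irrefl _)

end Paper
end
end

section
/- Let κ ≤ μ be infinite cardinals with κ regular. The poset 𝔹(μ,κ) is κ-directed closed: every directed subset of 𝔹(μ,κ) of cardinality less than κ has a lower bound. -/
noncomputable section

open Cardinal Set

namespace Paper

/-- The order type of a set of ordinals. -/
def otp (C : Set Ordinal) : Ordinal.{1} :=
  Ordinal.type (Subrel ((· < ·) : Ordinal → Ordinal → Prop) (· ∈ C))

/-- A condition in the poset `𝔹(mu, kap)`: a sequence `⟨C α : α ∈ s⟩` where
`s` is a bounded subset of `mu⁺` with maximal element `top`, containing all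
ordinals below `top` of cofinality `≥ kap`, with each `C α` a club in `α` of
order type `≤ mu`, coherent at limit points. -/
structure BCond (mu kap : Cardinal.{0}) where
  s : Set Ordinal
  C : Ordinal → Set Ordinal
  top : Ordinal
  top_mem : top ∈ s
  le_top : ∀ α ∈ s, α ≤ top
  lt_succ : ∀ α ∈ s, α < (Order.succ mu).ord
  cof_mem : ∀ α < top, kap ≤ α.cof → α ∈ s
  club : ∀ α ∈ s, IsClubIn (C α) α
  otp_le : ∀ α ∈ s, otp (C α) ≤ Ordinal.lift.{1} mu.ord
  coherent : ∀ β ∈ s, ∀ α < β, IsLimitPt α (C β) → α ∈ s ∧ C β ∩ Set.Iio α = C α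

/-- The order on `𝔹(mu, kap)`: `BExt q p` means `q ≤ p`, i.e. `s^q`
end-extends `s^p` and the clubs agree on `s^p`. -/
def BExt {mu kap : Cardinal.{0}} (q p : BCond mu kap) : Prop :=
  p.s ⊆ q.s ∧ (∀ α ∈ q.s, α ≤ p.top → α ∈ p.s) ∧ ∀ α ∈ p.s, q.C α = p.C α

lemma otp_empty : otp (∅ : Set Ordinal) = 0 := Ordinal.type_eq_zero_of_empty _

lemma otp_singleton (γ : Ordinal.{0}) : otp ({γ} : Set Ordinal) = 1 :=
  Ordinal.type_eq_one_of_unique _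

lemma zero_lt_succ_ord (mu : Cardinal.{0}) : (0 : Ordinal) < (Order.succ mu).ord := by
  rw [Cardinal.lt_ord]; simpa using lt_of_le_of_lt (zero_le mu) (Order.lt_succ mu)

/-- The trivial condition with top `0`. -/
def botCond (mu kap : Cardinal.{0}) : BCond mu kap where
  s := {0}
  C := fun _ => ∅
  top := 0
  top_mem := rfl
  le_top := fun α hα => le_of_eq hα
  lt_succ := fun α hα => by
    rw [Set.mem_singleton_iff] at hα; subst hα; exact zero_lt_succ_ord mu
  cof_mem := fun α h _ => absurd h (not_lt_of_ge (show (0:Ordinal) ≤ α by simp))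
  club := fun α hα => by
    rw [Set.mem_singleton_iff] at hα; subst hα
    exact ⟨by simp, fun γ hγ => absurd hγ (not_lt_of_ge (show (0:Ordinal) ≤ γ by simp)),
      fun γ hγ => absurd hγ (not_lt_of_ge (show (0:Ordinal) ≤ γ by simp))⟩
  otp_le := fun α _ => by rw [otp_empty]; simp
  coherent := fun β hβ α hαβ _ =>
    absurd (lt_of_lt_of_le hαβ (le_of_eq hβ)) (not_lt_of_ge (show (0:Ordinal) ≤ α by simp))

lemma singleton_inter_Iio_empty {γ γ' : Ordinal} (h : γ' ≤ γ) :
    ({γ} : Set Ordinal) ∩ Set.Iio γ' = ∅ := by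
  ext x
  simp only [Set.mem_inter_iff, Set.mem_singleton_iff, Set.mem_Iio, Set.mem_empty_iff_false,
    iff_false, not_and]
  rintro rfl
  exact fun hx => absurd (hx.trans_le h) (lt_irrefl _)

lemma isClubIn_singleton (γ : Ordinal) : IsClubIn ({γ} : Set Ordinal) (γ + 1) := by
  have hsucc : ∀ a : Ordinal, a < γ + 1 ↔ a ≤ γ := by
    intro a; rw [Ordinal.add_one_eq_succ, Order.lt_succ_iff]
  refine ⟨fun x hx => ?_, fun g hg => ⟨γ, rfl, (hsucc g).mp hg⟩, fun g hg hg0 hsup => ?_⟩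
  · rw [Set.mem_singleton_iff] at hx; subst hx
    rw [Set.mem_Iio, hsucc]
  · rw [singleton_inter_Iio_empty ((hsucc g).mp hg), csSup_empty] at hsup
    exact absurd hsup.symm (ne_of_gt hg0)

lemma not_isLimitPt_singleton {γ α : Ordinal} (h0 : 0 < γ) :
    ¬ IsLimitPt α ({γ} : Set Ordinal) := by
  rintro ⟨hmem, hsup⟩
  rw [Set.mem_singleton_iff] at hmem; subst hmem
  rw [singleton_inter_Iio_empty le_rfl, csSup_empty] at hsup
  exact absurd hsup.symm (ne_of_gt h0)

/-- Proposition 8.6(1): for infinite cardinals `kap ≤ mu` with `kap` regular,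
the poset `𝔹(mu, kap)` is `kap`-directed closed: every directed subset of
cardinality less than `kap` has a lower bound. -/
theorem statement12 (mu kap : Cardinal.{0}) (hk : kap.IsRegular)
    (hmu : ℵ₀ ≤ mu) (hkm : kap ≤ mu) (D : Set (BCond mu kap))
    (hdir : ∀ p ∈ D, ∀ q ∈ D, ∃ r ∈ D, BExt r p ∧ BExt r q)
    (hcard : #D < Cardinal.lift.{1} kap) :
    ∃ r : BCond mu kap, ∀ p ∈ D, BExt r p := by
  classical
  rcases D.eq_empty_or_nonempty with hD | ⟨p₀, hp₀⟩
  · exact ⟨botCond mu kap, by simp [hD]⟩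
  -- clubs agree on common domain
  have agree : ∀ p ∈ D, ∀ q ∈ D, ∀ α, α ∈ p.s → α ∈ q.s → p.C α = q.C α := by
    intro p hp q hq α hαp hαq
    obtain ⟨w, _, hwp, hwq⟩ := hdir p hp q hq
    rw [← hwp.2.2 α hαp, ← hwq.2.2 α hαq]
  by_cases hmax : ∃ p ∈ D, ∀ q ∈ D, q.top ≤ p.top
  · -- the condition with maximal top is a lower bound
    obtain ⟨p, hp, hpmax⟩ := hmax
    refine ⟨p, fun q hq => ?_⟩
    obtain ⟨w, hw, hwp, hwq⟩ := hdir p hp q hq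
    refine ⟨fun α hα => hwp.2.1 α (hwq.1 hα) ((q.le_top α hα).trans (hpmax q hq)), ?_, ?_⟩
    · intro α hα hle
      exact hwq.2.1 α (hwp.1 hα) hle
    · intro α hα
      have hαp : α ∈ p.s := hwp.2.1 α (hwq.1 hα) ((q.le_top α hα).trans (hpmax q hq))
      exact agree p hp q hq α hαp hα
  push_neg at hmax
  -- the sup of the tops
  set T : Set Ordinal := BCond.top '' D with hT
  have hTne : T.Nonempty := ⟨p₀.top, p₀, hp₀, rfl⟩
  have hTbdd : BddAbove T := by
    refine ⟨(Order.succ mu).ord, ?_⟩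
    rintro t ⟨p, hp, rfl⟩
    exact (p.lt_succ _ p.top_mem).le
  set γ : Ordinal := sSup T with hγ
  have hle : ∀ p ∈ D, p.top ≤ γ := fun p hp => le_csSup hTbdd ⟨p, hp, rfl⟩
  have hlt : ∀ p ∈ D, p.top < γ := by
    intro p hp
    obtain ⟨q, hq, hpq⟩ := hmax p hp
    exact hpq.trans_le (hle q hq)
  have hex : ∀ α < γ, ∃ p ∈ D, α < p.top := by
    intro α hα
    obtain ⟨t, ⟨p, hp, rfl⟩, htα⟩ := (lt_csSup_iff hTbdd hTne).mp hα
    exact ⟨p, hp, htα⟩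
  have hγpos : 0 < γ := lt_of_le_of_lt (show (0:Ordinal) ≤ p₀.top by simp) (hlt p₀ hp₀)
  -- a small indexing family for T
  obtain ⟨ι, f, hrange, hι⟩ : ∃ (ι : Type) (f : ι → Ordinal.{0}), Set.range f = T ∧ #ι < kap := by
    have hTcard : #T < Cardinal.lift.{1} kap := lt_of_le_of_lt (Cardinal.mk_image_le) hcard
    obtain ⟨c, hc, hceq⟩ := Cardinal.lt_lift_iff.mp hTcard
    obtain ⟨e⟩ : Nonempty (c.out ≃ T) := by
      rw [← Cardinal.lift_mk_eq', Cardinal.mk_out]; simpa using hceq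
    refine ⟨c.out, fun i => (e i : Ordinal), ?_, by rwa [Cardinal.mk_out]⟩
    rw [show (fun i => ((e i : Ordinal))) = Subtype.val ∘ e from rfl,
      e.surjective.range_comp, Subtype.range_coe]
  have hγf : iSup f = γ := by rw [hγ, ← hrange]; rfl
  have hfT : ∀ i, f i ∈ T := fun i => hrange ▸ Set.mem_range_self i
  have hflt : ∀ i, f i < γ := by
    intro i
    obtain ⟨p, hp, hpe⟩ := hfT i
    rw [← hpe]; exact hlt p hp
  have hcof : γ.cof < kap := by
    rw [← hγf]
    exact lt_of_le_of_lt (Ordinal.cof_iSup_le (fun i => hγf ▸ hflt i)) hι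
  have hγlt : γ < (Order.succ mu).ord := by
    rw [← hγf]
    refine Cardinal.iSup_lt_ord_of_isRegular (isRegular_succ hmu)
      (lt_of_lt_of_le hι (hkm.trans (Order.le_succ mu))) ?_
    intro i
    obtain ⟨p, hp, hpe⟩ := hfT i
    rw [← hpe]; exact p.lt_succ _ p.top_mem
  have hγsucc : γ < γ + 1 := by
    rw [Ordinal.add_one_eq_succ]; exact Order.lt_succ γ
  have hltsucc : ∀ a : Ordinal, a < γ + 1 ↔ a ≤ γ := by
    intro a; rw [Ordinal.add_one_eq_succ, Order.lt_succ_iff]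
  -- union of the domains and clubs
  set S : Set Ordinal := {α | ∃ p ∈ D, α ∈ p.s} with hSdef
  set CS : Ordinal → Set Ordinal := fun α => {x | ∃ p ∈ D, α ∈ p.s ∧ x ∈ p.C α} with hCSdef
  have hCS : ∀ p ∈ D, ∀ α ∈ p.s, CS α = p.C α := by
    intro p hp α hα
    ext x
    constructor
    · rintro ⟨q, hq, hαq, hx⟩
      rwa [agree q hq p hp α hαq hα] at hx
    · intro hx; exact ⟨p, hp, hα, hx⟩
  have hSle : ∀ α ∈ S, α ≤ γ := by
    rintro α ⟨p, hp, hα⟩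
    exact (p.le_top α hα).trans (hle p hp)
  have hSne : ∀ α ∈ S, α ≠ γ + 1 := fun α hα =>
    ne_of_lt (lt_of_le_of_lt (hSle α hα) hγsucc)
  refine ⟨⟨S ∪ {γ + 1},
    (fun α => if α = γ + 1 then ({γ} : Set Ordinal) else CS α),
    γ + 1, Set.mem_union_right _ rfl, ?_, ?_, ?_, ?_, ?_, ?_⟩, ?_⟩
  · -- le_top
    rintro α (hα | hα)
    · exact (hSle α hα).trans hγsucc.le
    · exact le_of_eq hα
  · -- lt_succ
    rintro α (hα | hα)
    · obtain ⟨p, hp, hαp⟩ := hα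
      exact p.lt_succ α hαp
    · rw [hα]
      exact (Cardinal.isSuccLimit_ord (hmu.trans (Order.le_succ mu))).succ_lt hγlt
  · -- cof_mem
    intro α hα hκ
    rcases lt_or_eq_of_le ((hltsucc α).mp hα) with hαγ | rfl
    · obtain ⟨p, hp, hαp⟩ := hex α hαγ
      exact Set.mem_union_left _ ⟨p, hp, p.cof_mem α hαp hκ⟩
    · exact absurd (hκ.trans_lt hcof) (lt_irrefl _)
  · -- club
    rintro α (hα | hα)
    · rw [if_neg (hSne α hα)]
      obtain ⟨p, hp, hαp⟩ := hα
      rw [hCS p hp α hαp]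
      exact p.club α hαp
    · rw [Set.mem_singleton_iff] at hα; subst hα
      rw [if_pos rfl]
      exact isClubIn_singleton γ
  · -- otp_le
    rintro α (hα | hα)
    · rw [if_neg (hSne α hα)]
      obtain ⟨p, hp, hαp⟩ := hα
      rw [hCS p hp α hαp]
      exact p.otp_le α hαp
    · rw [Set.mem_singleton_iff] at hα; subst hα
      rw [if_pos rfl, otp_singleton]
      have h : (0:Ordinal) < mu.ord := by
        rw [Cardinal.lt_ord]; simpa using lt_of_lt_of_le aleph0_pos hmu
      have h2 : Ordinal.lift.{1} (0 : Ordinal) < Ordinal.lift.{1} mu.ord :=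
        Ordinal.lift_lt.mpr h
      simpa [Order.one_le_iff_pos] using h2
  · -- coherent
    rintro β (hβ | hβ) α hαβ hlim
    · rw [if_neg (hSne β hβ)] at hlim ⊢
      obtain ⟨p, hp, hβp⟩ := hβ
      rw [hCS p hp β hβp] at hlim ⊢
      obtain ⟨hαs, hCeq⟩ := p.coherent β hβp α hαβ hlim
      have hane : α ≠ γ + 1 := hSne α ⟨p, hp, hαs⟩
      refine ⟨Set.mem_union_left _ ⟨p, hp, hαs⟩, ?_⟩
      rw [if_neg hane, hCS p hp α hαs]
      exact hCeq
    · rw [Set.mem_singleton_iff] at hβ; subst hβ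
      rw [if_pos rfl] at hlim
      exact absurd hlim (not_isLimitPt_singleton hγpos)
  · -- lower bound
    intro p hp
    refine ⟨fun α hα => Set.mem_union_left _ ⟨p, hp, hα⟩, ?_, ?_⟩
    · rintro α (hα | hα) hαle
      · obtain ⟨q, hq, hαq⟩ := hα
        obtain ⟨w, hw, hwp, hwq⟩ := hdir p hp q hq
        exact hwp.2.1 α (hwq.1 hαq) hαle
      · rw [Set.mem_singleton_iff] at hα; subst hα
        exact absurd (lt_of_le_of_lt (hαle.trans (hle p hp)) hγsucc) (lt_irrefl _)
    · intro α hα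
      show (if α = γ + 1 then ({γ} : Set Ordinal) else CS α) = p.C α
      rw [if_neg (hSne α ⟨p, hp, hα⟩), hCS p hp α hα]

end Paper
end
end

section
/- Let n < ω, and let λ be a regular uncountable cardinal with λ^{<λ} = λ. Suppose ⟨C_α : α < λ⟩ is a □(λ)-sequence and S ⊆ S^λ_{ℵ_n} is a stationary set such that otp(C_α) = ℵ_n for all α ∈ S. Then S ∈ I[λ]. -/
noncomputable section

open Cardinal Set

namespace Paper

/-- A `□(lam)`-sequence: clubs `C α ⊆ α` for limit `α < lam`, coherent, with
no thread. -/
structure SquareSeq (lam : Cardinal.{0}) where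
  C : Ordinal → Set Ordinal
  club : ∀ α < lam.ord, Order.IsSuccLimit α → IsClubIn (C α) α
  coherent : ∀ α β, α < β → β < lam.ord → Order.IsSuccLimit α → Order.IsSuccLimit β →
    IsLimitPt α (C β) → C β ∩ Set.Iio α = C α
  noThread : ¬ ∃ D, IsClubIn D lam.ord ∧
    ∀ α, Order.IsSuccLimit α → IsLimitPt α D → D ∩ Set.Iio α = C α

/-- `S` is stationary in `δ`: it meets every club in `δ`. -/
def StationaryIn (S : Set Ordinal) (δ : Ordinal) : Prop :=
  ∀ D, IsClubIn D δ → (S ∩ D).Nonempty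

/-- `γ` is approachable with respect to the sequence `a`: there is an
unbounded `A ⊆ γ` of order type `cf(γ)` all of whose proper initial segments
are enumerated by `a` below `γ`. -/
def Approachable (a : Ordinal → Set Ordinal) (γ : Ordinal) : Prop :=
  ∃ A : Set Ordinal, A ⊆ Set.Iio γ ∧ (∀ β < γ, ∃ δ ∈ A, β ≤ δ) ∧
    otp A = Ordinal.lift.{1} γ.cof.ord ∧
    ∀ β < γ, ∃ α < γ, A ∩ Set.Iio β = a α

/-- `S ∈ I[lam]`: there are a club `D ⊆ lam` and a sequence
`⟨a α : α < lam⟩` of bounded subsets of `lam` such that every `γ ∈ S ∩ D` has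
`cf(γ) < γ` and is approachable with respect to the sequence. -/
def MemApproachIdeal (S : Set Ordinal) (lam : Cardinal.{0}) : Prop :=
  ∃ (D : Set Ordinal) (a : Ordinal → Set Ordinal),
    IsClubIn D lam.ord ∧ (∀ α < lam.ord, ∃ β < lam.ord, a α ⊆ Set.Iio β) ∧
    ∀ γ ∈ S ∩ D, γ.cof.ord < γ ∧ Approachable a γ

/-- Any infinite set of ordinals bounded by `σ` accumulates at some limit
ordinal `ρ ≤ σ`. -/
lemma exists_acc_pt {X : Set Ordinal} {σ : Ordinal} (hXσ : X ⊆ Set.Iic σ)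
    (hX : X.Infinite) :
    ∃ ρ, ρ ≤ σ ∧ Order.IsSuccLimit ρ ∧ sSup (X ∩ Set.Iio ρ) = ρ ∧ (X ∩ Set.Iio ρ).Infinite := by
  set P : Set Ordinal := {ρ | (X ∩ Set.Iio ρ).Infinite} with hP
  have hPne : P.Nonempty := by
    refine ⟨σ + 1, ?_⟩
    have : X ∩ Set.Iio (σ + 1) = X := by
      apply Set.inter_eq_self_of_subset_left
      intro x hx
      exact lt_of_le_of_lt (hXσ hx) (Order.lt_succ σ)
    show (X ∩ Set.Iio (σ + 1)).Infinite
    rw [this]; exact hX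
  set ρ := sInf P with hρ
  have hρP : ρ ∈ P := csInf_mem hPne
  have hmin : ∀ s < ρ, ¬ (X ∩ Set.Iio s).Infinite := by
    intro s hs hsin
    exact absurd (csInf_le' (s := P) hsin) (not_le.mpr hs)
  have hρ0 : ρ ≠ 0 := by
    intro h
    rw [h] at hρP
    have : X ∩ Set.Iio (0:Ordinal) = ∅ := by
      ext x; simp
    rw [hP] at hρP
    simp only [Set.mem_setOf_eq, this] at hρP
    exact hρP Set.finite_empty
  have hlim : Order.IsSuccLimit ρ := by
    refine Ordinal.isSuccLimit_iff.mpr ⟨hρ0, Order.isSuccPrelimit_of_succ_lt ?_⟩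
    intro s hs
    rcases lt_or_ge (Order.succ s) ρ with h | h
    · exact h
    · exfalso
      have heq : ρ = Order.succ s := le_antisymm h (Order.succ_le_of_lt hs)
      have : (X ∩ Set.Iio s).Infinite := by
        have hsub : (X ∩ Set.Iio ρ) \ {s} ⊆ X ∩ Set.Iio s := by
          rintro x ⟨⟨hx1, hx2⟩, hx3⟩
          refine ⟨hx1, ?_⟩
          have : x < Order.succ s := heq ▸ hx2
          exact lt_of_le_of_ne (Order.lt_succ_iff.mp this) (by simpa using hx3)
        exact Set.Infinite.mono hsub (Set.Infinite.diff hρP (Set.finite_singleton s))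
      exact hmin s hs this
  have hbdd : BddAbove (X ∩ Set.Iio ρ) := ⟨ρ, fun x hx => le_of_lt hx.2⟩
  have hsup : sSup (X ∩ Set.Iio ρ) = ρ := by
    refine le_antisymm (csSup_le hρP.nonempty fun x hx => le_of_lt hx.2) ?_
    by_contra hlt
    push_neg at hlt
    set s := sSup (X ∩ Set.Iio ρ) with hs
    have h1 : X ∩ Set.Iio ρ ⊆ X ∩ Set.Iio (Order.succ s) := by
      rintro x ⟨hx1, hx2⟩
      exact ⟨hx1, Order.lt_succ_iff.mpr (le_csSup hbdd ⟨hx1, hx2⟩)⟩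
    have h2 : (X ∩ Set.Iio (Order.succ s)).Infinite := Set.Infinite.mono h1 hρP
    exact hmin _ (hlim.succ_lt hlt) h2
  have hρσ : ρ ≤ σ := by
    by_contra h
    push_neg at h
    have : sSup (X ∩ Set.Iio ρ) ≤ σ := csSup_le hρP.nonempty fun x hx => hXσ hx.1
    rw [hsup] at this
    exact absurd this (not_le.mpr h)
  exact ⟨ρ, hρσ, hlim, hsup, hρP⟩


variable {lam : Cardinal.{0}}

/-- Decomposition of initial segments of the clubs of a square sequence. -/
lemma seg (sq : SquareSeq lam) {γ : Ordinal} (hγ : γ < lam.ord) (hlim : Order.IsSuccLimit γ)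
    {β : Ordinal} (hβ : β < γ) :
    ∃ τ < β + 1, ∃ e : Set Ordinal, e.Finite ∧ e ⊆ Set.Iio (β + 1) ∧
      (sq.C γ ∩ Set.Iio β = e ∨
        (sq.C τ ⊆ Set.Iio (β + 1) ∧ sq.C γ ∩ Set.Iio β = sq.C τ ∪ e)) := by
  obtain ⟨hsub, hunb, hclosed⟩ := sq.club γ hγ hlim
  set X := sq.C γ ∩ Set.Iio β with hXdef
  have hXβ : X ⊆ Set.Iio β := fun x hx => hx.2
  by_cases hfin : X.Finite
  · exact ⟨0, lt_of_le_of_lt (zero_le : (0:Ordinal) ≤ β) (Order.lt_succ β), X, hfin, fun x hx => lt_trans (hXβ hx) (Order.lt_succ β),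
      Or.inl rfl⟩
  have hX : X.Infinite := hfin
  -- key claim: any infinite subset of X accumulates at a limit point of `C γ` below `β`
  have claim : ∀ Z ⊆ X, Z.Infinite → ∃ ρ, ρ ≤ β ∧ Order.IsSuccLimit ρ ∧ ρ ∈ sq.C γ ∧
      sSup (sq.C γ ∩ Set.Iio ρ) = ρ ∧ (Z ∩ Set.Iio ρ).Nonempty := by
    intro Z hZX hZ
    obtain ⟨ρ, hρβ, hρlim, hρsup, hρinf⟩ :=
      exists_acc_pt (fun x hx => Set.mem_Iic.mpr (le_of_lt (hXβ (hZX hx)))) hZ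
    have hZC : Z ∩ Set.Iio ρ ⊆ sq.C γ ∩ Set.Iio ρ := fun x hx => ⟨(hZX hx.1).1, hx.2⟩
    have hbdd : BddAbove (sq.C γ ∩ Set.Iio ρ) := ⟨ρ, fun x hx => le_of_lt hx.2⟩
    have hsup2 : sSup (sq.C γ ∩ Set.Iio ρ) = ρ := by
      refine le_antisymm (csSup_le (hρinf.nonempty.mono hZC) fun x hx => le_of_lt hx.2) ?_
      calc ρ = sSup (Z ∩ Set.Iio ρ) := hρsup.symm
        _ ≤ sSup (sq.C γ ∩ Set.Iio ρ) := csSup_le_csSup hbdd hρinf.nonempty hZC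
    have hργ : ρ < γ := lt_of_le_of_lt hρβ hβ
    exact ⟨ρ, hρβ, hρlim, hclosed ρ hργ hρlim.pos hsup2, hsup2, hρinf.nonempty⟩
  set L : Set Ordinal :=
    {ξ | ξ ≤ β ∧ Order.IsSuccLimit ξ ∧ ξ ∈ sq.C γ ∧ sSup (sq.C γ ∩ Set.Iio ξ) = ξ} with hLdef
  have hLne : L.Nonempty := by
    obtain ⟨ρ, h1, h2, h3, h4, _⟩ := claim X (fun x hx => hx) hX
    exact ⟨ρ, h1, h2, h3, h4⟩
  have hbddL : BddAbove L := ⟨β, fun ξ hξ => hξ.1⟩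
  set τ := sSup L with hτdef
  have hτβ : τ ≤ β := csSup_le hLne fun ξ hξ => hξ.1
  have hτγ : τ < γ := lt_of_le_of_lt hτβ hβ
  have hτL : τ ∈ L := by
    by_contra hτL
    have hlt : ∀ ξ ∈ L, ξ < τ := fun ξ hξ =>
      lt_of_le_of_ne (le_csSup hbddL hξ) (fun h => hτL (h ▸ hξ))
    obtain ⟨ξ0, hξ0⟩ := id hLne
    have hτlim : Order.IsSuccLimit τ := by
      refine Ordinal.isSuccLimit_iff.mpr ⟨fun h => ?_, Order.isSuccPrelimit_of_succ_lt fun a ha => ?_⟩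
      · exact absurd (h ▸ hlt ξ0 hξ0) (by simpa using hξ0.2.1.pos.not_gt)
      · by_contra hcon
        push_neg at hcon
        have : ∃ ξ ∈ L, a < ξ := by
          by_contra hall
          push_neg at hall
          exact absurd (csSup_le hLne hall) (not_le.mpr ha)
        obtain ⟨ξ, hξL, haξ⟩ := this
        have := lt_of_lt_of_le (hlt ξ hξL) hcon
        exact absurd (Order.lt_succ_iff.mp this) (not_le.mpr haξ)
    have hne2 : (sq.C γ ∩ Set.Iio τ).Nonempty := ⟨ξ0, hξ0.2.2.1, hlt ξ0 hξ0⟩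
    have hbdd2 : BddAbove (sq.C γ ∩ Set.Iio τ) := ⟨τ, fun x hx => le_of_lt hx.2⟩
    have hsupτ : sSup (sq.C γ ∩ Set.Iio τ) = τ := by
      refine le_antisymm (csSup_le hne2 fun x hx => le_of_lt hx.2) ?_
      by_contra hcon
      push_neg at hcon
      have : ∃ ξ ∈ L, sSup (sq.C γ ∩ Set.Iio τ) < ξ := by
        by_contra hall
        push_neg at hall
        exact absurd (csSup_le hLne hall) (not_le.mpr hcon)
      obtain ⟨ξ, hξL, hsξ⟩ := this
      exact absurd (le_csSup hbdd2 ⟨hξL.2.2.1, hlt ξ hξL⟩) (not_le.mpr hsξ)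
    exact hτL ⟨hτβ, hτlim, hclosed τ hτγ hτlim.pos hsupτ, hsupτ⟩
  obtain ⟨_, hτlim, hτC, hτsup⟩ := hτL
  have hcoh : sq.C γ ∩ Set.Iio τ = sq.C τ :=
    sq.coherent τ γ hτγ hγ hτlim hlim ⟨hτC, hτsup⟩
  set e := X ∩ Set.Ici τ with hedef
  have hXeq : X = sq.C τ ∪ e := by
    ext x
    constructor
    · intro hx
      rcases lt_or_ge x τ with h | h
      · exact Or.inl (hcoh ▸ ⟨hx.1, h⟩)
      · exact Or.inr ⟨hx, h⟩
    · rintro (hx | hx)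
      · rw [← hcoh] at hx
        exact ⟨hx.1, lt_of_lt_of_le hx.2 hτβ⟩
      · exact hx.1
  have hefin : e.Finite := by
    by_contra hecon
    obtain ⟨ρ, hρβ, hρlim, hρC, hρsup, ⟨x, hxe, hxρ⟩⟩ :=
      claim e (fun x hx => hx.1) hecon
    have hρL : ρ ∈ L := ⟨hρβ, hρlim, hρC, hρsup⟩
    have : ρ ≤ τ := le_csSup hbddL hρL
    exact absurd (lt_of_le_of_lt hxe.2 hxρ) (not_lt.mpr this)
  refine ⟨τ, lt_of_le_of_lt hτβ (Order.lt_succ β), e, hefin,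
    fun x hx => lt_trans (hXβ hx.1) (Order.lt_succ β), Or.inr ⟨?_, hXeq⟩⟩
  rw [← hcoh]
  intro x hx
  exact lt_trans (lt_of_lt_of_le hx.2 hτβ) (Order.lt_succ β)



/-- The shapes of sets that can occur as initial segments of the clubs of a
square sequence, relativized to a bound `β`. -/
def Cond (Cs : Ordinal → Set Ordinal) (β : Ordinal) (x : Set Ordinal) : Prop :=
  ∃ τ < β, ∃ e : Set Ordinal, e.Finite ∧ e ⊆ Set.Iio β ∧
    (x = e ∨ (Cs τ ⊆ Set.Iio β ∧ x = Cs τ ∪ e))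

/-- The canonical bound used for the enumeration at level `β`. -/
def OBnd (β : Ordinal) : Ordinal := (β.card + ℵ₀).ord

lemma enum_exists (Cs : Ordinal → Set Ordinal) {lam : Cardinal.{0}}
    (hl : lam.IsRegular) (hunc : ℵ₀ < lam) {β : Ordinal} (h0 : 0 < β)
    (hβ : β < lam.ord) :
    ∃ w : Ordinal → Set Ordinal,
      (∀ i, w i ⊆ Set.Iio β) ∧ ∀ x, Cond Cs β x → ∃ i < OBnd β, w i = x := by
  set κ : Cardinal := β.card + ℵ₀ with hκdef
  have hβcard : β.card < lam := (Cardinal.lt_ord).mp hβ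
  have hκ : κ < lam := Cardinal.add_lt_of_lt hl.aleph0_le hβcard hunc
  have hκinf : ℵ₀ ≤ κ := self_le_add_left ℵ₀ β.card
  set Dty := (↥(Set.Iio β) × List ↥(Set.Iio β) × Bool) with hDty
  have hne : Nonempty Dty := ⟨⟨⟨0, h0⟩, [], true⟩⟩
  set F : Dty → Set Ordinal := fun d =>
    (if d.2.2 then Cs ↑d.1 ∩ Set.Iio β else ∅) ∪ {o | ∃ y ∈ d.2.1, ↑y = o} with hF
  have hFsub : ∀ d, F d ⊆ Set.Iio β := by
    rintro ⟨τ, l, b⟩ o ho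
    rcases ho with ho | ho
    · rcases b with _ | _
      · simp at ho
      · exact ho.2
    · obtain ⟨y, _, hy⟩ := ho
      exact hy ▸ y.2
  have hIio : #↥(Set.Iio β) ≤ Cardinal.lift.{1} κ := by
    rw [Ordinal.mk_Iio_ordinal]
    exact Cardinal.lift_le.mpr (self_le_add_right β.card ℵ₀)
  have hList : #(List ↥(Set.Iio β)) ≤ Cardinal.lift.{1} κ := by
    refine (Cardinal.mk_list_le_max _).trans ?_
    refine max_le ?_ hIio
    exact (Cardinal.aleph0_le_lift.mpr hκinf)
  have hBool : Cardinal.lift.{1} #Bool ≤ Cardinal.lift.{1} κ := by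
    refine le_trans ?_ (Cardinal.aleph0_le_lift.mpr hκinf)
    have : (#Bool) ≤ ℵ₀ := Cardinal.mk_le_aleph0
    calc Cardinal.lift.{1} #Bool ≤ Cardinal.lift.{1} ℵ₀ := Cardinal.lift_le.mpr this
      _ = ℵ₀ := Cardinal.lift_aleph0
  have hcard : #Dty ≤ Cardinal.lift.{1} κ := by
    have hlk : ℵ₀ ≤ Cardinal.lift.{1} κ := Cardinal.aleph0_le_lift.mpr hκinf
    calc #Dty = #↥(Set.Iio β) * #(List ↥(Set.Iio β) × Bool) := by
          rw [Cardinal.mk_prod]; simp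
      _ = #↥(Set.Iio β) * (#(List ↥(Set.Iio β)) * Cardinal.lift.{1} #Bool) := by
          rw [Cardinal.mk_prod]; simp
      _ ≤ Cardinal.lift.{1} κ * (Cardinal.lift.{1} κ * Cardinal.lift.{1} κ) :=
          mul_le_mul' hIio (mul_le_mul' hList hBool)
      _ = Cardinal.lift.{1} κ := by
          rw [Cardinal.mul_eq_self hlk, Cardinal.mul_eq_self hlk]
  have hcard2 : #Dty ≤ #↥(Set.Iio κ.ord) := by
    rwa [Ordinal.mk_Iio_ordinal, Cardinal.card_ord]
  obtain ⟨f⟩ := (Cardinal.le_def _ _).mp hcard2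
  refine ⟨fun i => if h : i < κ.ord then F (Function.invFun f ⟨i, h⟩) else ∅, ?_, ?_⟩
  · intro i
    by_cases h : i < κ.ord
    · simp only [dif_pos h]
      exact hFsub _
    · simp [dif_neg h]
  · rintro x ⟨τ, hτ, e, hefin, heβ, hx⟩
    obtain ⟨l, hl⟩ : ∃ l : List ↥(Set.Iio β), {o : Ordinal | ∃ y ∈ l, ↑y = o} = e := by
      refine ⟨hefin.toFinset.toList.pmap (fun o h => (⟨o, h⟩ : ↥(Set.Iio β)))
        (fun o ho => heβ (by simpa using ho)), ?_⟩
      ext o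
      simp only [Set.mem_setOf_eq, List.mem_pmap]
      constructor
      · rintro ⟨y, ⟨o', ho', rfl⟩, rfl⟩
        simpa using ho'
      · intro ho
        exact ⟨⟨o, heβ ho⟩, ⟨o, by simpa using ho, rfl⟩, rfl⟩
    have key : ∃ d : Dty, F d = x := by
      rcases hx with rfl | ⟨hCτ, rfl⟩
      · refine ⟨⟨⟨τ, hτ⟩, l, false⟩, ?_⟩
        show (if (false = true) then Cs τ ∩ Set.Iio β else ∅) ∪ {o | ∃ y ∈ l, ↑y = o} = _
        rw [if_neg (by simp), Set.empty_union, hl]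
      · refine ⟨⟨⟨τ, hτ⟩, l, true⟩, ?_⟩
        show (if (true = true) then Cs τ ∩ Set.Iio β else ∅) ∪ {o | ∃ y ∈ l, ↑y = o} = _
        rw [if_pos rfl, hl, Set.inter_eq_self_of_subset_left hCτ]
    obtain ⟨d, hd⟩ := key
    refine ⟨↑(f d), (f d).2, ?_⟩
    dsimp only
    have hlt : (↑(f d) : Ordinal) < κ.ord := (f d).2
    rw [dif_pos hlt]
    have : (⟨↑(f d), (f d).2⟩ : ↥(Set.Iio κ.ord)) = f d := Subtype.coe_eta _ _
    rw [this, Function.leftInverse_invFun f.injective d, hd]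

lemma sSup_lt_of_small {lam : Cardinal.{0}} (hl : lam.IsRegular)
    {A : Set Ordinal} (hA : A ⊆ Set.Iio lam.ord)
    (hcard : #A < Cardinal.lift.{1} lam) : sSup A < lam.ord := by
  rcases A.eq_empty_or_nonempty with rfl | hne
  · rw [csSup_empty]
    exact hl.ord_pos
  obtain ⟨c, hc⟩ := Cardinal.mem_range_lift_of_le.{0,1} hcard.le
  have hclam : c < lam := by
    rwa [← Cardinal.lift_lt.{0,1}, hc]
  have hmk : Cardinal.lift.{0} #↥A = Cardinal.lift.{1} #c.ord.ToType := by
    rw [Cardinal.lift_id', Cardinal.mk_toType, Cardinal.card_ord]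
    exact hc.symm
  obtain ⟨e⟩ := Cardinal.lift_mk_eq'.mp hmk
  set f : c.ord.ToType → Ordinal := fun x => ↑(e.symm x) with hf
  have hsup : iSup f < lam.ord := by
    refine Ordinal.iSup_lt_ord ?_ fun i => hA (e.symm i).2
    rw [Cardinal.mk_toType, Cardinal.card_ord, hl.cof_eq]
    exact hclam
  refine lt_of_le_of_lt (csSup_le hne fun a ha => ?_) hsup
  have : f (e ⟨a, ha⟩) = a := by rw [hf]; simp
  exact this ▸ le_ciSup (Ordinal.bddAbove_range f) (e ⟨a, ha⟩)


/-- Claim in Theorem 7.2: let `n < ω` and let `lam` be a regular uncountable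
cardinal with `lam^{<lam} = lam`.  If `⟨C_α : α < lam⟩` is a
`□(lam)`-sequence and `S ⊆ S^lam_{ℵ_n}` is stationary with `otp(C_α) = ℵ_n`
for all `α ∈ S`, then `S ∈ I[lam]`. -/
theorem statement15 (n : ℕ) (lam : Cardinal.{0}) (hl : lam.IsRegular)
    (hunc : ℵ₀ < lam) (hpow : Cardinal.powerlt lam lam = lam)
    (sq : SquareSeq lam) (S : Set Ordinal)
    (hS : S ⊆ {α | α < lam.ord ∧ α.cof = Cardinal.aleph.{0} n})
    (hstat : StationaryIn S lam.ord)
    (hotp : ∀ α ∈ S, otp (sq.C α) = Ordinal.lift.{1} (Cardinal.aleph.{0} n).ord) :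
    MemApproachIdeal S lam := by
  classical
  set ν : Ordinal := (Cardinal.aleph.{0} n).ord with hνdef
  have hordlim : Order.IsSuccLimit lam.ord := Cardinal.isSuccLimit_ord hl.aleph0_le
  have hsucclt : ∀ {b : Ordinal}, b < lam.ord → b + 1 < lam.ord := by
    intro b hb
    rw [Ordinal.add_one_eq_succ]
    exact hordlim.succ_lt hb
  -- `ℵ_n < lam`, via a point of the stationary set
  have hIioclub : IsClubIn (Set.Iio lam.ord) lam.ord :=
    ⟨fun _ h => h, fun γ hγ => ⟨γ, hγ, le_refl γ⟩, fun γ hγ _ _ => hγ⟩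
  obtain ⟨γ0, hγ0S, _⟩ := hstat _ hIioclub
  have haleph : Cardinal.aleph.{0} n < lam := by
    have h1 := (hS hγ0S).2
    have h2 := Ordinal.cof_le_card γ0
    rw [h1] at h2
    exact lt_of_le_of_lt h2 ((Cardinal.lt_ord).mp (hS hγ0S).1)
  have hν : ν < lam.ord := Cardinal.ord_lt_ord.mpr haleph
  -- choose the local enumerations
  have hWex : ∀ β : Ordinal, ∃ w : Ordinal → Set Ordinal,
      (∀ i, w i ⊆ Set.Iio (β + 1)) ∧
      (0 < β → β < lam.ord →
        ∀ x, Cond sq.C β x → ∃ i < OBnd β, w i = x) := by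
    intro β
    by_cases h : 0 < β ∧ β < lam.ord
    · obtain ⟨w, h1, h2⟩ := enum_exists sq.C hl hunc h.1 h.2
      exact ⟨w, fun i x hx => lt_trans (h1 i hx) (lt_of_le_of_lt (le_refl β)
        (by rw [Ordinal.add_one_eq_succ]; exact Order.lt_succ β)),
        fun _ _ => h2⟩
    · exact ⟨fun _ => ∅, fun i x hx => absurd hx (Set.notMem_empty x),
        fun h1 h2 => absurd ⟨h1, h2⟩ h⟩
  choose W hWsub hWenum using hWex
  have hOB : ∀ {β : Ordinal}, β < lam.ord → OBnd β < lam.ord := by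
    intro β hβ
    exact Cardinal.ord_lt_ord.mpr
      (Cardinal.add_lt_of_lt hl.aleph0_le ((Cardinal.lt_ord).mp hβ) hunc)
  have hOBmono : ∀ {β b : Ordinal}, β ≤ b → OBnd β ≤ OBnd b := by
    intro β b h
    exact Cardinal.ord_le_ord.mpr (add_le_add_left (Ordinal.card_le_card h) ℵ₀)
  -- the global pairing
  have hmkX : #(↥(Set.Iio lam.ord)) = Cardinal.lift.{1} lam := by
    rw [Ordinal.mk_Iio_ordinal, Cardinal.card_ord]
  have hprod : #(↥(Set.Iio lam.ord) × ↥(Set.Iio lam.ord)) = #(↥(Set.Iio lam.ord)) := by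
    rw [Cardinal.mk_prod, Cardinal.lift_id, hmkX,
      Cardinal.mul_eq_self (Cardinal.aleph0_le_lift.mpr hl.aleph0_le)]
  obtain ⟨u⟩ := Cardinal.eq.mp hprod
  set a : Ordinal → Set Ordinal := fun o =>
    if h : o < lam.ord then W ↑(u.symm ⟨o, h⟩).1 ↑(u.symm ⟨o, h⟩).2 else ∅ with hadef
  have hacode : ∀ (p : ↥(Set.Iio lam.ord) × ↥(Set.Iio lam.ord)),
      a ↑(u p) = W ↑p.1 ↑p.2 := by
    intro p
    have hlt : (↑(u p) : Ordinal) < lam.ord := (u p).2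
    rw [hadef]
    dsimp only
    rw [dif_pos hlt]
    have : (⟨↑(u p), hlt⟩ : ↥(Set.Iio lam.ord)) = u p := Subtype.coe_eta _ _
    rw [this, Equiv.symm_apply_apply]
  -- the step function for building closure points
  have step : ∀ b : Ordinal, ∃ η : Ordinal, b < lam.ord →
      (η < lam.ord ∧ ∀ β, 0 < β → β ≤ b → ∀ x, Cond sq.C β x →
        ∃ α < η, a α = x) := by
    intro b
    by_cases hb : b < lam.ord
    swap
    · exact ⟨0, fun h => absurd h hb⟩
    set P : Set (↥(Set.Iio lam.ord) × ↥(Set.Iio lam.ord)) :=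
      {p | ↑p.1 ≤ b ∧ (↑p.2 : Ordinal) < OBnd ↑p.1} with hPdef
    set A : Set Ordinal :=
      (fun p : ↥(Set.Iio lam.ord) × ↥(Set.Iio lam.ord) => (↑(u p) : Ordinal) + 1) '' P
      with hAdef
    have hAsub : A ⊆ Set.Iio lam.ord := by
      rintro x ⟨p, _, rfl⟩
      exact hsucclt (u p).2
    have hbdd : BddAbove A := ⟨lam.ord, fun x hx => le_of_lt (hAsub hx)⟩
    -- cardinality of A
    have hAcard : #↥A < Cardinal.lift.{1} lam := by
      have h1 : #↥A ≤ #↥P := Cardinal.mk_image_le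
      have h2 : #↥P ≤ #(↥(Set.Iio (b + 1)) × ↥(Set.Iio (OBnd b))) := by
        refine Cardinal.mk_le_of_injective (f := fun q =>
          (⟨↑q.1.1, lt_of_le_of_lt q.2.1
              (by rw [Ordinal.add_one_eq_succ]; exact Order.lt_succ b)⟩,
           ⟨↑q.1.2, lt_of_lt_of_le q.2.2 (hOBmono q.2.1)⟩)) ?_
        rintro ⟨⟨p1, p2⟩, hq⟩ ⟨⟨r1, r2⟩, hr⟩ h
        simp only [Prod.mk.injEq, Subtype.mk.injEq] at h
        apply Subtype.ext
        simp only [Prod.mk.injEq]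
        exact ⟨Subtype.ext (Subtype.mk.inj h.1), Subtype.ext (Subtype.mk.inj h.2)⟩
      have h3 : #(↥(Set.Iio (b + 1)) × ↥(Set.Iio (OBnd b)))
          < Cardinal.lift.{1} lam := by
        rw [Cardinal.mk_prod, Cardinal.lift_id, Cardinal.lift_id,
          Ordinal.mk_Iio_ordinal, Ordinal.mk_Iio_ordinal]
        set κ : Cardinal := b.card + ℵ₀ with hκdef
        have hκinf : ℵ₀ ≤ κ := self_le_add_left ℵ₀ b.card
        have hκlam : κ < lam :=
          Cardinal.add_lt_of_lt hl.aleph0_le ((Cardinal.lt_ord).mp hb) hunc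
        have hb1 : (b + 1).card ≤ κ := by
          rw [Ordinal.card_add, Ordinal.card_one]
          exact add_le_add_right (Cardinal.one_le_aleph0) b.card
        have hob : (OBnd b).card ≤ κ := by
          rw [OBnd, Cardinal.card_ord]
        calc Cardinal.lift.{1} (b + 1).card * Cardinal.lift.{1} (OBnd b).card
            ≤ Cardinal.lift.{1} κ * Cardinal.lift.{1} κ :=
              mul_le_mul' (Cardinal.lift_le.mpr hb1) (Cardinal.lift_le.mpr hob)
          _ = Cardinal.lift.{1} κ := Cardinal.mul_eq_self
              (Cardinal.aleph0_le_lift.mpr hκinf)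
          _ < Cardinal.lift.{1} lam := Cardinal.lift_lt.mpr hκlam
      exact lt_of_le_of_lt (le_trans h1 h2) h3
    refine ⟨sSup A, fun _ => ⟨sSup_lt_of_small hl hAsub hAcard, ?_⟩⟩
    intro β hβ0 hβb x hx
    have hβlt : β < lam.ord := lt_of_le_of_lt hβb hb
    obtain ⟨i, hi, hwi⟩ := hWenum β hβ0 hβlt x hx
    have hilt : i < lam.ord := lt_trans hi (hOB hβlt)
    set p : ↥(Set.Iio lam.ord) × ↥(Set.Iio lam.ord) := (⟨β, hβlt⟩, ⟨i, hilt⟩)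
      with hpdef
    have hpP : p ∈ P := ⟨hβb, hi⟩
    have hcode : (↑(u p) : Ordinal) + 1 ∈ A := ⟨p, hpP, rfl⟩
    refine ⟨↑(u p), ?_, ?_⟩
    · have := le_csSup hbdd hcode
      exact lt_of_lt_of_le (by rw [Ordinal.add_one_eq_succ]; exact Order.lt_succ _) this
    · rw [hacode p]
      exact hwi
  choose eta heta using step
  -- the club D
  set D : Set Ordinal := {γ | γ < lam.ord ∧ ν < γ ∧
    ∀ β, 0 < β → β < γ → ∀ x, Cond sq.C β x → ∃ α < γ, a α = x} with hDdef
  have hDsub : D ⊆ Set.Iio lam.ord := fun γ hγ => hγ.1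
  -- D is unbounded
  have hDunb : ∀ ξ < lam.ord, ∃ γ ∈ D, ξ ≤ γ := by
    intro ξ hξ
    set h : ℕ → Ordinal := fun k =>
      Nat.rec (max (ξ + 1) (ν + 1)) (fun _ ih => max (eta ih) (ih + 1)) k with hhdef
    have hstep : ∀ k, h (k + 1) = max (eta (h k)) (h k + 1) := fun k => rfl
    have hklt : ∀ k, h k < lam.ord := by
      intro k
      induction k with
      | zero => exact max_lt (hsucclt hξ) (hsucclt hν)
      | succ k ih =>
        rw [hstep]
        exact max_lt ((heta (h k) ih).1) (hsucclt ih)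
    have hmono : ∀ k, h k < h (k + 1) := by
      intro k
      rw [hstep]
      exact lt_of_lt_of_le (by rw [Ordinal.add_one_eq_succ]; exact Order.lt_succ _)
        (le_max_right _ _)
    set γ := sSup (Set.range h) with hγdef
    have hrsub : Set.range h ⊆ Set.Iio lam.ord := by
      rintro x ⟨k, rfl⟩
      exact hklt k
    have hrbdd : BddAbove (Set.range h) := ⟨lam.ord, fun x hx => le_of_lt (hrsub hx)⟩
    have hγlt : γ < lam.ord := by
      refine sSup_lt_of_small hl hrsub ?_
      have h1 : Cardinal.lift.{0} #↥(Set.range h) ≤ Cardinal.lift.{1} #ℕ :=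
        Cardinal.mk_range_le_lift
      rw [Cardinal.lift_id', Cardinal.mk_nat, Cardinal.lift_aleph0] at h1
      refine lt_of_le_of_lt h1 ?_
      rw [← Cardinal.lift_aleph0.{1,0}]
      exact Cardinal.lift_lt.mpr hunc
    have hkle : ∀ k, h k ≤ γ := fun k => le_csSup hrbdd ⟨k, rfl⟩
    have h0le : max (ξ + 1) (ν + 1) ≤ γ := hkle 0
    refine ⟨γ, ⟨hγlt, ?_, ?_⟩, ?_⟩
    · exact lt_of_lt_of_le (lt_of_lt_of_le
        (by rw [Ordinal.add_one_eq_succ]; exact Order.lt_succ ν)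
        (le_max_right (ξ + 1) (ν + 1))) h0le
    · intro β hβ0 hβγ x hx
      have hk : ∃ k, β < h k := by
        by_contra hall
        push_neg at hall
        exact absurd (csSup_le (Set.range_nonempty h) (by rintro y ⟨k, rfl⟩; exact hall k))
          (not_le.mpr hβγ)
      obtain ⟨k, hβk⟩ := hk
      obtain ⟨α, hα, ha⟩ := (heta (h k) (hklt k)).2 β hβ0 (le_of_lt hβk) x hx
      refine ⟨α, ?_, ha⟩
      calc α < eta (h k) := hα
        _ ≤ h (k + 1) := by rw [hstep]; exact le_max_left _ _
        _ ≤ γ := hkle (k + 1)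
    · exact le_trans (le_trans (le_of_lt (by
        rw [Ordinal.add_one_eq_succ]; exact Order.lt_succ ξ))
        (le_max_left (ξ + 1) (ν + 1))) h0le
  -- D is a club
  have hDclub : IsClubIn D lam.ord := by
    refine ⟨hDsub, ?_, ?_⟩
    · intro γ hγ
      obtain ⟨δ, hδD, hδ⟩ := hDunb γ hγ
      exact ⟨δ, hδD, hδ⟩
    · intro γ hγ hγ0 hsup
      have hub : ∀ b < γ, ∃ d ∈ D ∩ Set.Iio γ, b < d := by
        intro b hb
        by_contra hall
        push_neg at hall
        have hne : (D ∩ Set.Iio γ).Nonempty := by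
          by_contra hemp
          rw [Set.not_nonempty_iff_eq_empty] at hemp
          rw [hemp, csSup_empty] at hsup
          exact absurd hsup.symm (ne_of_gt hγ0)
        have : sSup (D ∩ Set.Iio γ) ≤ b := csSup_le hne hall
        rw [hsup] at this
        exact absurd this (not_le.mpr hb)
      refine ⟨hγ, ?_, ?_⟩
      · by_cases hνγ : ν < γ
        · exact hνγ
        · push_neg at hνγ
          obtain ⟨d, ⟨hdD, hdγ⟩, _⟩ := hub 0 hγ0
          exact absurd (lt_of_lt_of_le hdγ hνγ) (not_lt.mpr (le_of_lt hdD.2.1))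
      · intro β hβ0 hβγ x hx
        obtain ⟨d, ⟨hdD, hdγ⟩, hbd⟩ := hub β hβγ
        obtain ⟨α, hα, ha⟩ := hdD.2.2 β hβ0 hbd x hx
        exact ⟨α, lt_trans hα hdγ, ha⟩
  -- bounded values
  have habdd : ∀ α < lam.ord, ∃ β < lam.ord, a α ⊆ Set.Iio β := by
    intro α hα
    rw [hadef]
    dsimp only
    rw [dif_pos hα]
    refine ⟨↑(u.symm ⟨α, hα⟩).1 + 1, hsucclt (u.symm ⟨α, hα⟩).1.2, ?_⟩
    exact hWsub _ _
  refine ⟨D, a, hDclub, habdd, ?_⟩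
  rintro γ ⟨hγS, hγD⟩
  have hγlt : γ < lam.ord := hγD.1
  have hcof : γ.cof = Cardinal.aleph.{0} n := (hS hγS).2
  have hγlim : Order.IsSuccLimit γ := by
    rw [← Ordinal.aleph0_le_cof, hcof]
    exact Cardinal.aleph0_le_aleph n
  obtain ⟨hCsub, hCunb, _⟩ := sq.club γ hγlt hγlim
  constructor
  · rw [hcof]
    exact hγD.2.1
  · refine ⟨sq.C γ, hCsub, hCunb, ?_, ?_⟩
    · rw [hcof]
      exact hotp γ hγS
    · intro β hβ
      have hseg := seg sq hγlt hγlim hβ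
      obtain ⟨τ, hτ, e, h1, h2, h3⟩ := hseg
      have hcond : Cond sq.C (β + 1) (sq.C γ ∩ Set.Iio β) := ⟨τ, hτ, e, h1, h2, h3⟩
      have hβ1 : β + 1 < γ := by
        rw [Ordinal.add_one_eq_succ]
        exact hγlim.succ_lt hβ
      obtain ⟨α, hα, ha⟩ := hγD.2.2 (β + 1) (lt_of_le_of_lt (zero_le : (0:Ordinal) ≤ β)
        (by rw [Ordinal.add_one_eq_succ]; exact Order.lt_succ β)) hβ1 _ hcond
      exact ⟨α, hα, ha.symm⟩


end Paper
end
end
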